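/- arXiv:2003.07852 — 3 statements merged into one kernel-verified Lean document; each statement's English description precedes it below -/
import Mathlib

section
/- Let p be a prime and q ∈ ℤ_p^× a unit with q ≡ 1 (mod p), and additionally q ≡ 1 (mod 4) if p = 2. Then the group homomorphism ℤ → ℤ_p^× sending 1 to q extends to a continuous group homomorphism ℤ_p → ℤ_p^× (where ℤ_p is additive). -/
open Filter Finset Topology
namespace Stmt4Aux
variable {p : ℕ} [hp : Fact p.Prime]

lemma norm_pow_sub_one_le (v : ℤ_[p]) (n : ℕ) : ‖v ^ n - 1‖ ≤ ‖v - 1‖ := by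
  rw [← geom_sum_mul, norm_mul]
  exact mul_le_of_le_one_left (norm_nonneg _) (PadicInt.norm_le_one _)

lemma norm_inv_sub_one (u : ℤ_[p]ˣ) :
    ‖((u⁻¹ : ℤ_[p]ˣ) : ℤ_[p]) - 1‖ = ‖(u : ℤ_[p]) - 1‖ := by
  have h : ((u⁻¹ : ℤ_[p]ˣ) : ℤ_[p]) - 1 = ((u⁻¹ : ℤ_[p]ˣ) : ℤ_[p]) * (1 - (u : ℤ_[p])) := by
    rw [mul_sub, mul_one, show ((u⁻¹ : ℤ_[p]ˣ) : ℤ_[p]) * (u : ℤ_[p]) = 1 from u.inv_mul]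
  rw [h, norm_mul, PadicInt.norm_units, one_mul, norm_sub_rev]

lemma norm_zpow_sub_one_le (u : ℤ_[p]ˣ) (m : ℤ) :
    ‖((u ^ m : ℤ_[p]ˣ) : ℤ_[p]) - 1‖ ≤ ‖(u : ℤ_[p]) - 1‖ := by
  cases m with
  | ofNat n =>
      rw [Int.ofNat_eq_coe, zpow_natCast, Units.val_pow_eq_pow_val]
      exact norm_pow_sub_one_le _ _
  | negSucc n =>
      rw [zpow_negSucc, ← inv_pow, Units.val_pow_eq_pow_val]
      exact (norm_pow_sub_one_le _ _).trans (norm_inv_sub_one u).le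

lemma step (v : ℤ_[p]) {k : ℕ} (hv : ‖v - 1‖ ≤ (p : ℝ) ^ (-(1 + k : ℤ))) :
    ‖v ^ p - 1‖ ≤ (p : ℝ) ^ (-(1 + (k + 1) : ℤ)) := by
  have hp1 : (1 : ℝ) < p := mod_cast hp.out.one_lt
  have hp0 : (0 : ℝ) < p := lt_trans one_pos hp1
  have hS : ‖∑ i ∈ range p, v ^ i‖ ≤ (p : ℝ) ^ (-1 : ℤ) := by
    have h1 : ∑ i ∈ range p, v ^ i = (∑ i ∈ range p, (v ^ i - 1)) + (p : ℤ_[p]) := by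
      rw [Finset.sum_sub_distrib]; simp
    rw [h1]
    refine (PadicInt.nonarchimedean _ _).trans (max_le ?_ ?_)
    · refine (IsUltrametricDist.norm_sum_le_of_forall_le_of_nonneg
        (zpow_nonneg hp0.le _) fun i _ => (norm_pow_sub_one_le v i).trans hv).trans ?_
      exact zpow_le_zpow_right₀ hp1.le (by omega)
    · rw [PadicInt.norm_p, zpow_neg, zpow_one]
  calc ‖v ^ p - 1‖ = ‖∑ i ∈ range p, v ^ i‖ * ‖v - 1‖ := by
        rw [← geom_sum_mul, norm_mul]
    _ ≤ (p:ℝ) ^ (-1:ℤ) * (p:ℝ) ^ (-(1+k:ℤ)) :=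
        mul_le_mul hS hv (norm_nonneg _) (zpow_nonneg hp0.le _)
    _ = (p:ℝ) ^ (-(1+(k+1):ℤ)) := by
        rw [← zpow_add₀ hp0.ne']; ring_nf

section Q
variable (q : ℤ_[p]ˣ)

/-- The approximating sequence for `q ^ x`. -/
noncomputable def seqv (x : ℤ_[p]) (n : ℕ) : ℤ_[p] :=
  ((q ^ (x.appr n : ℤ) : ℤ_[p]ˣ) : ℤ_[p])

/-- The candidate for `q ^ x`. -/
noncomputable def plim (x : ℤ_[p]) : ℤ_[p] := limUnder atTop (seqv q x)

variable {q}
variable (hq : ‖(q : ℤ_[p]) - 1‖ ≤ (p : ℝ) ^ (-1 : ℤ))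
include hq

lemma pow_pow_est (n : ℕ) :
    ‖((q ^ (p ^ n) : ℤ_[p]ˣ) : ℤ_[p]) - 1‖ ≤ (p : ℝ) ^ (-(1 + n : ℤ)) := by
  induction n with
  | zero => simpa using hq
  | succ n ih =>
      have : (q ^ (p ^ (n+1)) : ℤ_[p]ˣ) = (q ^ (p ^ n)) ^ p := by
        rw [← pow_mul, pow_succ]
      rw [this, Units.val_pow_eq_pow_val]
      exact step _ ih

lemma zpow_est (a b : ℤ) (n : ℕ) (h : (p ^ n : ℤ) ∣ (a - b)) :
    ‖((q ^ a : ℤ_[p]ˣ) : ℤ_[p]) - ((q ^ b : ℤ_[p]ˣ) : ℤ_[p])‖ ≤ (p : ℝ) ^ (-(1 + n : ℤ)) := by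
  obtain ⟨m, hm⟩ := h
  have key : ((q ^ a : ℤ_[p]ˣ) : ℤ_[p]) - ((q ^ b : ℤ_[p]ˣ) : ℤ_[p])
      = ((q ^ b : ℤ_[p]ˣ) : ℤ_[p]) * (((q ^ (a - b) : ℤ_[p]ˣ) : ℤ_[p]) - 1) := by
    rw [mul_sub, mul_one, ← Units.val_mul, ← zpow_add, add_sub_cancel]
  rw [key, norm_mul, PadicInt.norm_units, one_mul]
  have h2 : (q ^ (a - b) : ℤ_[p]ˣ) = (q ^ (p ^ n)) ^ m := by
    rw [← zpow_natCast q (p ^ n), ← zpow_mul]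
    congr 1
  rw [h2]
  exact (norm_zpow_sub_one_le _ m).trans (pow_pow_est hq n)

omit hq

lemma int_dvd_of_dvd {x : ℤ_[p]} {a b : ℤ} {n : ℕ}
    (ha : (p : ℤ_[p]) ^ n ∣ (x - a)) (hb : (p : ℤ_[p]) ^ n ∣ (x - b)) :
    (p ^ n : ℤ) ∣ (a - b) := by
  have : (p : ℤ_[p]) ^ n ∣ (((a - b : ℤ) : ℤ_[p])) := by
    push_cast
    simpa using (dvd_sub hb ha)
  exact (PadicInt.pow_p_dvd_int_iff n (a - b)).mp this

lemma appr_dvd (x : ℤ_[p]) {n m : ℕ} (h : n ≤ m) :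
    (p : ℤ_[p]) ^ n ∣ (x - (x.appr m : ℤ_[p])) := by
  have := PadicInt.appr_spec m x
  rw [Ideal.mem_span_singleton] at this
  exact dvd_trans (pow_dvd_pow _ h) this

lemma bound_tendsto : Tendsto (fun N : ℕ => (p:ℝ) ^ (-(1 + N : ℤ))) atTop (𝓝 0) := by
  have hp1 : (1 : ℝ) < p := mod_cast hp.out.one_lt
  have h0 : (0:ℝ) ≤ (p:ℝ)⁻¹ := by positivity
  have h1 : (p:ℝ)⁻¹ < 1 := inv_lt_one_of_one_lt₀ hp1
  have := (tendsto_pow_atTop_nhds_zero_of_lt_one h0 h1).comp (tendsto_add_atTop_nat 1)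
  refine this.congr fun N => ?_
  simp only [Function.comp]
  rw [zpow_neg, ← inv_zpow, ← zpow_natCast ((p:ℝ)⁻¹)]
  congr 1
  push_cast
  ring

include hq

lemma seqv_cauchy (x : ℤ_[p]) : CauchySeq (seqv q x) := by
  refine cauchySeq_of_le_tendsto_0 (fun N => (p:ℝ) ^ (-(1 + N : ℤ))) (fun n m N hn hm => ?_)
    bound_tendsto
  rw [dist_eq_norm]
  exact zpow_est hq _ _ N (int_dvd_of_dvd (appr_dvd x hn) (appr_dvd x hm))

lemma tendsto_plim (x : ℤ_[p]) : Tendsto (seqv q x) atTop (𝓝 (plim q x)) :=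
  (seqv_cauchy hq x).tendsto_limUnder

lemma plim_intCast (a : ℤ) : plim q (a : ℤ_[p]) = ((q ^ a : ℤ_[p]ˣ) : ℤ_[p]) := by
  refine tendsto_nhds_unique (tendsto_plim hq _) ?_
  rw [tendsto_iff_norm_sub_tendsto_zero]
  refine squeeze_zero_norm (fun n => ?_) (bound_tendsto (p := p))
  rw [norm_norm]
  refine zpow_est hq _ _ n (int_dvd_of_dvd (x := (a : ℤ_[p])) (appr_dvd _ le_rfl) ?_)
  simp

lemma plim_add (x y : ℤ_[p]) : plim q (x + y) = plim q x * plim q y := by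
  refine tendsto_nhds_unique (tendsto_plim hq _) ?_
  have h1 : Tendsto (fun n => seqv q x n * seqv q y n) atTop (𝓝 (plim q x * plim q y)) :=
    (tendsto_plim hq x).mul (tendsto_plim hq y)
  have h2 : Tendsto (fun n => seqv q (x+y) n - seqv q x n * seqv q y n) atTop (𝓝 0) := by
    refine squeeze_zero_norm (fun n => ?_) (bound_tendsto (p := p))
    have hmul : seqv q x n * seqv q y n = ((q ^ ((x.appr n : ℤ) + (y.appr n : ℤ)) : ℤ_[p]ˣ) : ℤ_[p]) := by
      rw [zpow_add, Units.val_mul]; rfl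
    rw [hmul]
    refine zpow_est hq _ _ n (int_dvd_of_dvd (x := x + y) (appr_dvd _ le_rfl) ?_)
    have hx := appr_dvd x (le_refl n)
    have hy := appr_dvd y (le_refl n)
    have := dvd_add hx hy
    push_cast
    convert this using 1
    ring
  have h3 := h1.add h2
  rw [add_zero] at h3
  refine h3.congr fun n => by ring

lemma plim_norm_one (x : ℤ_[p]) : ‖plim q x‖ = 1 := by
  refine tendsto_nhds_unique ((tendsto_plim hq x).norm) ?_
  have : (fun n => ‖seqv q x n‖) = fun _ => (1:ℝ) := by
    funext n; exact PadicInt.norm_units _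
  rw [this]
  exact tendsto_const_nhds

lemma plim_zero : plim q 0 = 1 := by
  have := plim_intCast hq 0
  simpa using this

lemma plim_sub_est (x y : ℤ_[p]) (n : ℕ) (h : (p : ℤ_[p]) ^ n ∣ (x - y)) :
    ‖plim q x - plim q y‖ ≤ (p:ℝ) ^ (-(1 + n : ℤ)) := by
  have ht := ((tendsto_plim hq x).sub (tendsto_plim hq y)).norm
  refine le_of_tendsto ht ?_
  filter_upwards [eventually_ge_atTop n] with m hm
  show ‖seqv q x m - seqv q y m‖ ≤ _
  refine zpow_est hq _ _ n (int_dvd_of_dvd (x := x) (appr_dvd x hm) ?_)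
  have hxy : x - (((y.appr m : ℤ)) : ℤ_[p]) = (x - y) + (y - ((y.appr m : ℕ) : ℤ_[p])) := by
    push_cast; ring
  rw [hxy]
  exact dvd_add h (appr_dvd y hm)

lemma plim_continuous : Continuous (plim (p := p) q) := by
  have hp1 : (1 : ℝ) < p := mod_cast hp.out.one_lt
  have hp0 : (0 : ℝ) < p := lt_trans one_pos hp1
  refine (LipschitzWith.of_dist_le_mul (K := 1) fun x y => ?_).continuous
  rw [NNReal.coe_one, one_mul, dist_eq_norm, dist_eq_norm]
  rcases eq_or_ne x y with rfl | hxy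
  · simp
  have hz : x - y ≠ 0 := sub_ne_zero_of_ne hxy
  set n : ℕ := (x - y).valuation with hn
  have hval : ((n : ℤ)) = (x - y).valuation := rfl
  have hnorm : ‖x - y‖ = (p:ℝ) ^ (-(n:ℤ)) := by
    rw [PadicInt.norm_eq_zpow_neg_valuation hz, hval]
  have hdvd : (p : ℤ_[p]) ^ n ∣ (x - y) := by
    rw [← Ideal.mem_span_singleton, ← PadicInt.norm_le_pow_iff_mem_span_pow]
    rw [hnorm]
  calc ‖plim q x - plim q y‖ ≤ (p:ℝ) ^ (-(1 + n : ℤ)) := plim_sub_est hq x y n hdvd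
    _ ≤ (p:ℝ) ^ (-(n:ℤ)) := zpow_le_zpow_right₀ hp1.le (by omega)
    _ = ‖x - y‖ := hnorm.symm

end Q
end Stmt4Aux

open Stmt4Aux in
/-- For a `p`-adic unit `q` with `q ≡ 1 (mod p)` (and `q ≡ 1 (mod 4)` if `p = 2`),
the homomorphism `ℤ → ℤ_[p]ˣ`, `1 ↦ q`, extends to a continuous group homomorphism
from the additive group `ℤ_[p]` to `ℤ_[p]ˣ`. -/
theorem stmt4 (p : ℕ) [Fact p.Prime] (q : ℤ_[p]ˣ)
    (h1 : (p : ℤ_[p]) ∣ ((q : ℤ_[p]) - 1))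
    (h2 : p = 2 → (4 : ℤ_[p]) ∣ ((q : ℤ_[p]) - 1)) :
    ∃ φ : Multiplicative ℤ_[p] →* ℤ_[p]ˣ,
      Continuous φ ∧ φ (Multiplicative.ofAdd (1 : ℤ_[p])) = q := by
  have hq : ‖(q : ℤ_[p]) - 1‖ ≤ (p : ℝ) ^ (-1 : ℤ) := by
    obtain ⟨c, hc⟩ := h1
    rw [hc, norm_mul, PadicInt.norm_p, zpow_neg, zpow_one]
    exact mul_le_of_le_one_right (by positivity) (PadicInt.norm_le_one c)
  have hmul : ∀ x y : ℤ_[p], plim q x * plim q y = plim q (x + y) := fun x y =>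
    (plim_add hq x y).symm
  have hinv : ∀ x : ℤ_[p], plim q x * plim q (-x) = 1 := fun x => by
    rw [hmul, add_neg_cancel, plim_zero hq]
  have hinv' : ∀ x : ℤ_[p], plim q (-x) * plim q x = 1 := fun x => by
    rw [hmul, neg_add_cancel, plim_zero hq]
  refine ⟨{ toFun := fun x => ⟨plim q x.toAdd, plim q (-x.toAdd), hinv _, hinv' _⟩
            map_one' := Units.ext (by simpa using plim_zero hq)
            map_mul' := fun x y => Units.ext (plim_add hq x.toAdd y.toAdd) }, ?_, ?_⟩
  · rw [Units.continuous_iff]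
    constructor
    · exact (plim_continuous hq).comp continuous_toAdd
    · exact (plim_continuous hq).comp (continuous_neg.comp continuous_toAdd)
  · refine Units.ext ?_
    have := plim_intCast hq 1
    simpa using this
end

section
/- Let ℓ be an odd prime and let K be a subgroup of ℤ_ℓ^× with the following closure property: whenever x, y ∈ ℤ_ℓ^× generate the same closed subgroup of ℤ_ℓ^×, then x ∈ K if and only if y ∈ K. If K contains an element of infinite order, then K is the internal direct product μ_e · H_n for some divisor e of ℓ − 1 and some integer n ≥ 1, where μ_e ≤ ℤ_ℓ^× is the subgroup of e-th roots of unity and H_n = {q ∈ ℤ_ℓ^× : v_ℓ(q − 1) ≥ n}. -/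
namespace St9
open Finset

variable {p : ℕ} [hp : Fact p.Prime]

lemma isUnit_iff_not_dvd (z : ℤ_[p]) : IsUnit z ↔ ¬ (p:ℤ_[p]) ∣ z := by
  rw [← PadicInt.norm_lt_one_iff_dvd, PadicInt.isUnit_iff]
  constructor
  · intro h h2; rw [h] at h2; exact lt_irrefl _ h2
  · intro h; exact le_antisymm (PadicInt.norm_le_one z) (not_lt.mp h)

lemma pow_dvd_iff_toZModPow_eq_zero (z : ℤ_[p]) (k : ℕ) :
    (p:ℤ_[p])^k ∣ z ↔ PadicInt.toZModPow k z = 0 := by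
  rw [← RingHom.mem_ker, PadicInt.ker_toZModPow, Ideal.mem_span_singleton]

lemma dvd_iff_toZMod_eq_zero (z : ℤ_[p]) : (p:ℤ_[p]) ∣ z ↔ PadicInt.toZMod z = 0 := by
  rw [← RingHom.mem_ker, PadicInt.ker_toZMod, PadicInt.maximalIdeal_eq_span_p,
    Ideal.mem_span_singleton]

lemma eq_zero_of_forall_pow_dvd (z : ℤ_[p]) (h : ∀ k : ℕ, (p:ℤ_[p])^k ∣ z) : z = 0 := by
  by_contra hz
  have hnorm : 0 < ‖z‖ := by simpa [norm_pos_iff] using hz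
  have hp1 : (1:ℝ) < (p:ℝ) := by
    exact_mod_cast hp.out.one_lt
  obtain ⟨k, hk⟩ := exists_pow_lt_of_lt_one hnorm (by
    rw [inv_lt_one_iff₀]; right; exact hp1 : (p:ℝ)⁻¹ < 1)
  have h2 : ‖z‖ ≤ (p:ℝ)^(-(k:ℤ)) := by
    rw [PadicInt.norm_le_pow_iff_mem_span_pow, Ideal.mem_span_singleton]; exact h k
  rw [zpow_neg, zpow_natCast, ← inv_pow] at h2
  exact absurd (lt_of_le_of_lt h2 hk) (lt_irrefl _)

/-- generic: geometric sum = k + (z-1)*C -/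
lemma geom_sum_eq_card_add (z : ℤ_[p]) (k : ℕ) :
    ∃ C : ℤ_[p], (∑ i ∈ range k, z ^ i) = (k:ℤ_[p]) + (z - 1) * C := by
  induction k with
  | zero => exact ⟨0, by simp⟩
  | succ k ih =>
    obtain ⟨C, hC⟩ := ih
    refine ⟨C + ∑ i ∈ range k, z ^ i, ?_⟩
    have h2 : z ^ k - 1 = (∑ i ∈ range k, z ^ i) * (z - 1) := (geom_sum_mul z k).symm
    rw [sum_range_succ]
    push_cast
    linear_combination hC + h2

lemma geom_sum_isUnit {z : ℤ_[p]} (hz : (p:ℤ_[p]) ∣ z - 1) {k : ℕ} (hk : ¬ (p ∣ k)) :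
    IsUnit (∑ i ∈ range k, z ^ i) := by
  obtain ⟨C, hC⟩ := geom_sum_eq_card_add z k
  rw [isUnit_iff_not_dvd, hC]
  intro hdvd
  have : (p:ℤ_[p]) ∣ (k:ℤ_[p]) := (dvd_add_right (hz.mul_right C)).mp (by rwa [add_comm] at hdvd)
  have : ((p:ℤ) ∣ (k:ℤ)) := by
    have h1 := (PadicInt.pow_p_dvd_int_iff (p := p) 1 (k:ℤ)).mp (by simpa using this)
    simpa using h1
  exact hk (Int.ofNat_dvd.mp (by simpa using this))

/-- coprime exponent: z^k - 1 = (z-1) * unit -/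
lemma pow_sub_one_coprime {z : ℤ_[p]} (hz : (p:ℤ_[p]) ∣ z - 1) {k : ℕ} (hk : ¬ (p ∣ k)) :
    ∃ u : ℤ_[p], IsUnit u ∧ z ^ k - 1 = (z - 1) * u := by
  refine ⟨∑ i ∈ range k, z ^ i, geom_sum_isUnit hz hk, ?_⟩
  rw [mul_comm]; exact (geom_sum_mul z k).symm

lemma pow_dvd_pow_sub_one_iff_coprime {z : ℤ_[p]} (hz : (p:ℤ_[p]) ∣ z - 1) {k : ℕ}
    (hk : ¬ (p ∣ k)) (n : ℕ) : (p:ℤ_[p])^n ∣ z ^ k - 1 ↔ (p:ℤ_[p])^n ∣ z - 1 := by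
  obtain ⟨u, hu, he⟩ := pow_sub_one_coprime hz hk
  rw [he, hu.dvd_mul_right]


lemma isUnit_one_add_p_mul (c : ℤ_[p]) : IsUnit (1 + (p:ℤ_[p]) * c) := by
  rw [isUnit_iff_not_dvd]
  intro h
  have : (p:ℤ_[p]) ∣ 1 := (dvd_add_right (Dvd.intro c rfl)).mp (by rwa [add_comm] at h)
  have h2 : IsUnit (p:ℤ_[p]) := isUnit_of_dvd_one this
  rw [isUnit_iff_not_dvd] at h2
  exact h2 dvd_rfl

/-- key LTE step: for odd p and z ≡ 1 mod p, z^p - 1 = (z-1) * p * (1 + p c). -/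
lemma pow_p_sub_one (hodd : Odd p) {z : ℤ_[p]} (hz : (p:ℤ_[p]) ∣ z - 1) :
    ∃ c : ℤ_[p], z ^ p - 1 = (z - 1) * ((p:ℤ_[p]) * (1 + (p:ℤ_[p]) * c)) := by
  obtain ⟨w, hw⟩ := hz
  -- A = sum_{i<p} z^i
  set A := ∑ i ∈ range p, z ^ i with hA
  -- A = p + (z-1) * S  where S = ∑_{i<p} (geom sums)
  have h1 : A = (p:ℤ_[p]) + (z - 1) * (∑ i ∈ range p, ∑ j ∈ range i, z ^ j) := by
    have : A - (p:ℤ_[p]) = ∑ i ∈ range p, (z ^ i - 1) := by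
      rw [hA, Finset.sum_sub_distrib]
      simp
    have h2 : ∑ i ∈ range p, (z ^ i - 1) = (z - 1) * ∑ i ∈ range p, ∑ j ∈ range i, z ^ j := by
      rw [Finset.mul_sum]
      apply Finset.sum_congr rfl
      intro i _
      rw [mul_comm]
      exact (geom_sum_mul z i).symm
    linear_combination this + h2
  -- (z-1) ∣ S - ∑ i
  have h3 : ∃ F, (∑ i ∈ range p, ∑ j ∈ range i, z ^ j)
      = ((∑ i ∈ range p, i : ℕ) : ℤ_[p]) + (z - 1) * F := by
    have hd : (z - 1) ∣ (∑ i ∈ range p, ∑ j ∈ range i, z ^ j) - ((∑ i ∈ range p, i : ℕ) : ℤ_[p]) := by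
      push_cast
      rw [← Finset.sum_sub_distrib]
      apply Finset.dvd_sum
      intro i _
      obtain ⟨C, hC⟩ := geom_sum_eq_card_add z i
      exact ⟨C, by rw [hC]; ring⟩
    obtain ⟨F, hF⟩ := hd
    exact ⟨F, by linear_combination hF⟩
  obtain ⟨F, hF⟩ := h3
  -- p ∣ ∑ i
  obtain ⟨s, hs⟩ : p ∣ ∑ i ∈ range p, i := by
    obtain ⟨h, hh⟩ : ∃ h, p - 1 = 2 * h := by
      obtain ⟨t, ht⟩ := hodd; exact ⟨t, by omega⟩
    have h2 : (∑ i ∈ range p, i) * 2 = p * (p - 1) := by rw [Finset.sum_range_id_mul_two]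
    have : (∑ i ∈ range p, i) * 2 = (p * h) * 2 := by rw [h2, hh]; ring
    exact ⟨h, Nat.eq_of_mul_eq_mul_right (by norm_num) this⟩
  refine ⟨w * ((s:ℤ_[p]) + w * F), ?_⟩
  have hgeom : A * (z - 1) = z ^ p - 1 := geom_sum_mul z p
  have hsum : ((∑ i ∈ range p, i : ℕ) : ℤ_[p]) = (p:ℤ_[p]) * (s:ℤ_[p]) := by
    rw [hs]; push_cast; ring
  calc z ^ p - 1 = A * (z - 1) := hgeom.symm
    _ = ((p:ℤ_[p]) + (z - 1) * (((p:ℤ_[p]) * s) + (z - 1) * F)) * (z - 1) := by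
        rw [h1, hF, hsum]
    _ = (z - 1) * ((p:ℤ_[p]) * (1 + (p:ℤ_[p]) * (w * ((s:ℤ_[p]) + w * F)))) := by
        rw [hw]; ring

/-- iterated: z^(p^j) - 1 = (z-1) * p^j * (1 + p c) -/
lemma pow_p_pow_sub_one (hodd : Odd p) {z : ℤ_[p]} (hz : (p:ℤ_[p]) ∣ z - 1) (j : ℕ) :
    ∃ c : ℤ_[p], z ^ (p ^ j) - 1 = (z - 1) * ((p:ℤ_[p])^j * (1 + (p:ℤ_[p]) * c)) := by
  induction j with
  | zero => exact ⟨0, by simp⟩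
  | succ j ih =>
    obtain ⟨c, hc⟩ := ih
    have hzj : (p:ℤ_[p]) ∣ z ^ (p ^ j) - 1 := by
      rw [hc]
      exact dvd_mul_of_dvd_left hz _
    obtain ⟨c', hc'⟩ := pow_p_sub_one hodd hzj
    refine ⟨c + c' + (p:ℤ_[p]) * (c * c'), ?_⟩
    have : z ^ (p ^ (j+1)) = (z ^ (p ^ j)) ^ p := by
      rw [← pow_mul, pow_succ]
    rw [this, hc']
    rw [hc]
    ring


/-- exact divisibility -/
def Ediv (a : ℤ_[p]) (n : ℕ) : Prop := (p:ℤ_[p])^n ∣ a ∧ ¬ (p:ℤ_[p])^(n+1) ∣ a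

lemma Ediv.ne_zero {a : ℤ_[p]} {n : ℕ} (h : Ediv a n) : a ≠ 0 := by
  rintro rfl; exact h.2 (dvd_zero _)

lemma Ediv_unique {a : ℤ_[p]} {n m : ℕ} (h1 : Ediv a n) (h2 : Ediv a m) : n = m := by
  by_contra hne
  rcases Nat.lt_or_ge n m with h | h
  · exact h1.2 ((pow_dvd_pow _ (by omega)).trans h2.1)
  · exact h2.2 ((pow_dvd_pow _ (by omega)).trans h1.1)

lemma Ediv_mul_unit {a u : ℤ_[p]} {n : ℕ} (h : Ediv a n) (hu : IsUnit u) : Ediv (a * u) n :=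
  ⟨h.1.mul_right u, fun hd => h.2 (by rwa [hu.dvd_mul_right] at hd)⟩

lemma Ediv_p_mul {a : ℤ_[p]} {n : ℕ} (h : Ediv a n) : Ediv (a * (p:ℤ_[p])) (n+1) := by
  constructor
  · rw [pow_succ]; exact mul_dvd_mul h.1 dvd_rfl
  · intro hd
    rw [pow_succ] at hd
    have hp0 : (p:ℤ_[p]) ≠ 0 := Nat.cast_ne_zero.mpr hp.out.ne_zero
    exact h.2 ((mul_dvd_mul_iff_right hp0).mp hd)

/-- exact valuation transfers under coprime exponent -/
lemma Ediv_pow_coprime {z : ℤ_[p]} (hz : (p:ℤ_[p]) ∣ z - 1) {k : ℕ} (hk : ¬ p ∣ k) {n : ℕ}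
    (h : Ediv (z - 1) n) : Ediv (z ^ k - 1) n := by
  obtain ⟨u, hu, he⟩ := pow_sub_one_coprime hz hk
  rw [he]; exact Ediv_mul_unit h hu

/-- Ediv times p^j -/
lemma Ediv_mul_p_pow {a : ℤ_[p]} {n : ℕ} (h : Ediv a n) (j : ℕ) :
    Ediv (a * (p:ℤ_[p])^j) (n + j) := by
  induction j with
  | zero => simpa using h
  | succ i ih =>
    have e2 : a * (p:ℤ_[p])^(i+1) = (a * (p:ℤ_[p])^i) * (p:ℤ_[p]) := by ring
    rw [e2, ← Nat.add_assoc]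
    exact Ediv_p_mul ih

/-- exact valuation under p^j-th power -/
lemma Ediv_pow_p_pow (hodd : Odd p) {z : ℤ_[p]} (hz : (p:ℤ_[p]) ∣ z - 1) {n : ℕ}
    (h : Ediv (z - 1) n) (j : ℕ) : Ediv (z ^ (p ^ j) - 1) (n + j) := by
  obtain ⟨c, hc⟩ := pow_p_pow_sub_one hodd hz j
  rw [hc, ← mul_assoc]
  exact Ediv_mul_unit (Ediv_mul_p_pow h j) (isUnit_one_add_p_mul c)

/-- reduction mod p on units -/
noncomputable def res (x : ℤ_[p]ˣ) : (ZMod p)ˣ := Units.map (PadicInt.toZMod (p := p)).toMonoidHom x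

lemma res_coe (x : ℤ_[p]ˣ) : ((res x : (ZMod p)ˣ) : ZMod p) = PadicInt.toZMod (x : ℤ_[p]) := rfl

lemma res_mul (x y : ℤ_[p]ˣ) : res (x * y) = res x * res y := by
  simp [res]

lemma res_pow (x : ℤ_[p]ˣ) (k : ℕ) : res (x ^ k) = (res x) ^ k := by
  simp [res]

lemma res_eq_one_iff (x : ℤ_[p]ˣ) : res x = 1 ↔ (p:ℤ_[p]) ∣ (x : ℤ_[p]) - 1 := by
  rw [dvd_iff_toZMod_eq_zero, Units.ext_iff, res_coe, map_sub, map_one, sub_eq_zero]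
  exact ⟨fun h => h, fun h => h⟩

/-- the order of x mod p -/
noncomputable def dd (x : ℤ_[p]ˣ) : ℕ := orderOf (res x)

lemma dd_pos (x : ℤ_[p]ˣ) : 0 < dd x := orderOf_pos _

lemma dd_dvd_p_sub_one (x : ℤ_[p]ˣ) : dd x ∣ p - 1 := by
  have := orderOf_dvd_card (x := res x)
  rwa [ZMod.card_units] at this

lemma not_p_dvd_dd (x : ℤ_[p]ˣ) : ¬ p ∣ dd x := by
  intro h
  have h1 : dd x ≤ p - 1 := Nat.le_of_dvd (by have := hp.out.two_le; omega) (dd_dvd_p_sub_one x)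
  have h2 : p ≤ dd x := Nat.le_of_dvd (dd_pos x) h
  have := hp.out.two_le
  omega

lemma dvd_pow_sub_one_iff (x : ℤ_[p]ˣ) (k : ℕ) :
    (p:ℤ_[p]) ∣ (x : ℤ_[p])^k - 1 ↔ dd x ∣ k := by
  rw [show ((x:ℤ_[p])^k) = ((x^k : ℤ_[p]ˣ) : ℤ_[p]) by simp, ← res_eq_one_iff, res_pow,
    ← orderOf_dvd_iff_pow_eq_one]
  simp [dd]

lemma p_dvd_pow_dd_sub_one (x : ℤ_[p]ˣ) : (p:ℤ_[p]) ∣ (x : ℤ_[p])^(dd x) - 1 :=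
  (dvd_pow_sub_one_iff x (dd x)).mpr dvd_rfl

/-- a torsion element which is ≡ 1 mod p is 1 -/
lemma torsion_one_unit_eq_one (hodd : Odd p) {w : ℤ_[p]ˣ} (hfin : IsOfFinOrder w)
    (h1 : (p:ℤ_[p]) ∣ (w : ℤ_[p]) - 1) : w = 1 := by
  set N := orderOf w with hN
  have hNpos : 0 < N := hfin.orderOf_pos
  set j := N.factorization p with hj
  set m := N / p ^ j with hm
  have hsplit : p ^ j * m = N := Nat.ordProj_mul_ordCompl_eq_self N p
  have hmnd : ¬ p ∣ m := Nat.not_dvd_ordCompl hp.out (by omega)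
  have hwN : (w : ℤ_[p]) ^ N = 1 := by
    have h' : w ^ N = 1 := pow_orderOf_eq_one w
    calc (w:ℤ_[p])^N = ((w^N : ℤ_[p]ˣ) : ℤ_[p]) := by simp
      _ = 1 := by rw [h']; rfl
  -- w^m - 1 = (w-1) * u
  obtain ⟨u, hu, he⟩ := pow_sub_one_coprime h1 hmnd
  have hq : (p:ℤ_[p]) ∣ (w:ℤ_[p])^m - 1 := by rw [he]; exact h1.mul_right u
  obtain ⟨c, hc⟩ := pow_p_pow_sub_one hodd hq j
  have hzero : ((w:ℤ_[p])^m) ^ (p ^ j) - 1 = 0 := by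
    rw [← pow_mul, mul_comm m (p^j), hsplit, hwN]; ring
  rw [hc] at hzero
  have hu2 := isUnit_one_add_p_mul c
  have hp0 : ((p:ℤ_[p])^j) ≠ 0 := pow_ne_zero _ (Nat.cast_ne_zero.mpr hp.out.ne_zero)
  have : (w:ℤ_[p])^m - 1 = 0 := by
    rcases mul_eq_zero.mp hzero with h | h
    · exact h
    · exact absurd (mul_eq_zero.mp h) (by
        rintro (h' | h')
        · exact hp0 h'
        · exact hu2.ne_zero h')
  rw [he] at this
  have hw1 : (w:ℤ_[p]) - 1 = 0 := by
    rcases mul_eq_zero.mp this with h | h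
    · exact h
    · exact absurd h hu.ne_zero
  ext
  rw [sub_eq_zero] at hw1
  simpa using hw1

lemma pow_dd_eq_one_of_finOrder (hodd : Odd p) {x : ℤ_[p]ˣ} (hfin : IsOfFinOrder x) :
    x ^ (dd x) = 1 := by
  apply torsion_one_unit_eq_one hodd (hfin.pow)
  have := p_dvd_pow_dd_sub_one x
  simpa [Units.val_pow_eq_pow_val] using this

lemma orderOf_eq_dd_of_finOrder (hodd : Odd p) {x : ℤ_[p]ˣ} (hfin : IsOfFinOrder x) :
    orderOf x = dd x := by
  apply Nat.dvd_antisymm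
  · exact orderOf_dvd_of_pow_eq_one (pow_dd_eq_one_of_finOrder hodd hfin)
  · exact orderOf_map_dvd _ x

lemma pow_dd_ne_one_of_infOrder {x : ℤ_[p]ˣ} (hx : ¬ IsOfFinOrder x) :
    (x : ℤ_[p]) ^ (dd x) - 1 ≠ 0 := by
  intro h
  rw [sub_eq_zero] at h
  have : x ^ (dd x) = 1 := by
    ext; simpa [Units.val_pow_eq_pow_val] using h
  exact hx (isOfFinOrder_iff_pow_eq_one.mpr ⟨dd x, dd_pos x, this⟩)

open scoped Classical in
/-- exact valuation of x^(dd x) - 1; 0 for torsion x by convention -/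
noncomputable def nn (x : ℤ_[p]ˣ) : ℕ :=
  if h : ∃ n, ¬ (p:ℤ_[p])^(n+1) ∣ ((x : ℤ_[p])^(dd x) - 1) then Nat.find h else 0

lemma nn_exists {x : ℤ_[p]ˣ} (hx : ¬ IsOfFinOrder x) :
    ∃ n, ¬ (p:ℤ_[p])^(n+1) ∣ ((x : ℤ_[p])^(dd x) - 1) := by
  by_contra h
  push_neg at h
  apply pow_dd_ne_one_of_infOrder hx
  apply eq_zero_of_forall_pow_dvd
  intro k
  rcases k with _ | k
  · simp
  · exact h k

lemma nn_Ediv {x : ℤ_[p]ˣ} (hx : ¬ IsOfFinOrder x) :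
    Ediv ((x : ℤ_[p])^(dd x) - 1) (nn x) := by
  classical
  rw [nn]
  rw [dif_pos (nn_exists hx)]
  constructor
  · rcases Nat.eq_zero_or_pos (Nat.find (nn_exists hx)) with h | h
    · rw [h]; simp
    · have := Nat.find_min (nn_exists hx) (show Nat.find (nn_exists hx) - 1 < Nat.find _ by omega)
      push_neg at this
      rwa [show Nat.find (nn_exists hx) - 1 + 1 = Nat.find (nn_exists hx) by omega] at this
  · exact Nat.find_spec (nn_exists hx)

lemma nn_eq_of_Ediv {x : ℤ_[p]ˣ} (hx : ¬ IsOfFinOrder x) {n : ℕ}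
    (h : Ediv ((x : ℤ_[p])^(dd x) - 1) n) : nn x = n :=
  Ediv_unique (nn_Ediv hx) h

lemma nn_pos {x : ℤ_[p]ˣ} (hx : ¬ IsOfFinOrder x) : 1 ≤ nn x := by
  by_contra h
  have h0 : nn x = 0 := by omega
  have := (nn_Ediv hx).2
  rw [h0] at this
  exact this (by simpa using p_dvd_pow_dd_sub_one x)


/-- Teichmüller lift: for any unit z there is a (p-1)-st root of unity congruent to z mod p -/
lemma exists_teichmuller (z : ℤ_[p]ˣ) :
    ∃ u : ℤ_[p]ˣ, u ^ (p - 1) = 1 ∧ (p:ℤ_[p]) ∣ (u : ℤ_[p]) - (z : ℤ_[p]) := by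
  classical
  set F : Polynomial ℤ_[p] := Polynomial.X ^ (p - 1) - Polynomial.C 1 with hF
  set a : ℤ_[p] := (z : ℤ_[p]) with ha
  have hp2 := hp.out.two_le
  have hderiv : F.derivative = Polynomial.C ((p:ℤ_[p]) - 1) * Polynomial.X ^ (p - 2) := by
    rw [hF]
    rw [Polynomial.derivative_sub, Polynomial.derivative_C, Polynomial.derivative_X_pow]
    rw [show p - 1 - 1 = p - 2 by omega, Nat.cast_sub (show 1 ≤ p by omega), sub_zero]
    push_cast
    ring
  have hderiv_eval : F.derivative.eval a = ((p:ℤ_[p]) - 1) * a ^ (p - 2) := by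
    rw [hderiv]; simp
  have hunit_deriv : IsUnit (F.derivative.eval a) := by
    rw [hderiv_eval]
    apply IsUnit.mul
    · rw [isUnit_iff_not_dvd]
      intro hdvd
      have h1 : (p:ℤ_[p]) ∣ 1 := by
        have : (p:ℤ_[p]) ∣ (p:ℤ_[p]) - ((p:ℤ_[p]) - 1) := (dvd_sub dvd_rfl hdvd)
        simpa using this
      have := isUnit_of_dvd_one h1
      rw [isUnit_iff_not_dvd] at this; exact this dvd_rfl
    · exact (z.isUnit.pow _)
  have hnorm_deriv : ‖F.derivative.eval a‖ = 1 := by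
    rw [← PadicInt.isUnit_iff]; exact hunit_deriv
  have heval : F.eval a = a ^ (p - 1) - 1 := by rw [hF]; simp
  have hdvd_eval : (p:ℤ_[p]) ∣ F.eval a := by
    rw [heval]
    rw [dvd_pow_sub_one_iff]
    have h1 : (res z) ^ (p - 1) = 1 := by
      have := pow_card_eq_one (G := (ZMod p)ˣ) (x := res z)
      rwa [ZMod.card_units] at this
    exact orderOf_dvd_of_pow_eq_one h1
  have hnorm_eval : ‖F.eval a‖ < 1 := by
    rw [PadicInt.norm_lt_one_iff_dvd]; exact hdvd_eval
  have hlt : ‖F.eval a‖ < ‖F.derivative.eval a‖ ^ 2 := by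
    rw [hnorm_deriv]; simpa using hnorm_eval
  obtain ⟨r, hr0, hrdist, -, -⟩ := hensels_lemma hlt
  have hrpow : r ^ (p - 1) = 1 := by
    have h2 : r ^ (p-1) - 1 = 0 := by
      have h3 := hr0; rw [hF] at h3; simpa using h3
    exact sub_eq_zero.mp h2
  have hru : IsUnit r := by
    apply IsUnit.of_mul_eq_one (a := r) (r ^ (p - 2))
    rw [← pow_succ']
    rw [show p - 2 + 1 = p - 1 by omega]
    exact hrpow
  refine ⟨hru.unit, ?_, ?_⟩
  · ext
    rw [Units.val_pow_eq_pow_val, IsUnit.unit_spec]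
    simpa using hrpow
  · rw [IsUnit.unit_spec, ← PadicInt.norm_lt_one_iff_dvd]
    rw [Polynomial.coe_aeval_eq_eval, hnorm_deriv] at hrdist
    exact hrdist

lemma isOfFinOrder_of_pow_eq_one {u : ℤ_[p]ˣ} {k : ℕ} (hk : 0 < k) (h : u ^ k = 1) :
    IsOfFinOrder u := isOfFinOrder_iff_pow_eq_one.mpr ⟨k, hk, h⟩

/-- decomposition z = (root of unity) * (1-unit at level n) -/
lemma teichmuller_decomposition (hodd : Odd p) {z : ℤ_[p]ˣ} {e n : ℕ} (he : e ∣ p - 1)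
    (hn : 1 ≤ n) (hz : (p:ℤ_[p])^n ∣ (z : ℤ_[p])^e - 1) :
    ∃ u v : ℤ_[p]ˣ, u ^ e = 1 ∧ (p:ℤ_[p])^n ∣ (v : ℤ_[p]) - 1 ∧ z = u * v := by
  have hp2 := hp.out.two_le
  have he0 : e ≠ 0 := by
    rintro rfl
    rw [Nat.zero_dvd] at he; omega
  have hpe : ¬ p ∣ e := by
    intro h
    have := Nat.le_of_dvd (Nat.pos_of_ne_zero he0) h
    have := Nat.le_of_dvd (by omega) he
    omega
  obtain ⟨u₀, hu₀pow, hu₀cong⟩ := exists_teichmuller z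
  have hu₀fin : IsOfFinOrder u₀ := isOfFinOrder_of_pow_eq_one (by omega) hu₀pow
  -- u₀^e = 1
  have hue : u₀ ^ e = 1 := by
    apply torsion_one_unit_eq_one hodd (hu₀fin.pow)
    have h1 : (p:ℤ_[p]) ∣ (u₀:ℤ_[p])^e - (z:ℤ_[p])^e := (hu₀cong).trans (sub_dvd_pow_sub_pow _ _ e)
    have h2 : (p:ℤ_[p]) ∣ (z:ℤ_[p])^e - 1 :=
      (dvd_pow_self (p:ℤ_[p]) (by omega : n ≠ 0)).trans hz
    have h3 := dvd_add h1 h2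
    rw [Units.val_pow_eq_pow_val]
    calc (p:ℤ_[p]) ∣ ((u₀:ℤ_[p])^e - (z:ℤ_[p])^e) + ((z:ℤ_[p])^e - 1) := h3
      _ = (u₀:ℤ_[p])^e - 1 := by ring
  refine ⟨u₀, u₀⁻¹ * z, hue, ?_, by rw [← mul_assoc, mul_inv_cancel, one_mul]⟩
  set v : ℤ_[p]ˣ := u₀⁻¹ * z with hv
  -- v ≡ 1 mod p
  have hv1 : (p:ℤ_[p]) ∣ (v:ℤ_[p]) - 1 := by
    have : (v:ℤ_[p]) - 1 = ((u₀⁻¹:ℤ_[p]ˣ):ℤ_[p]) * ((z:ℤ_[p]) - (u₀:ℤ_[p])) := by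
      rw [hv]
      push_cast
      rw [mul_sub, Units.inv_mul]
    rw [this]
    exact Dvd.dvd.mul_left (by rw [show (z:ℤ_[p]) - u₀ = -((u₀:ℤ_[p]) - z) by ring]; exact hu₀cong.neg_right) _
  -- v^e ≡ 1 mod p^n
  have hve : (p:ℤ_[p])^n ∣ (v:ℤ_[p])^e - 1 := by
    have h4 : v ^ e = (u₀ ^ e)⁻¹ * z ^ e := by rw [hv, mul_pow, inv_pow]
    rw [hue, inv_one, one_mul] at h4
    have h5 : (v:ℤ_[p])^e = (z:ℤ_[p])^e := by
      rw [← Units.val_pow_eq_pow_val, h4, Units.val_pow_eq_pow_val]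
    rw [h5]; exact hz
  rwa [pow_dvd_pow_sub_one_iff_coprime hv1 hpe] at hve

/-- root-of-unity rigidity: torsion units with equal reduction are equal -/
lemma torsion_eq_of_res_eq (hodd : Odd p) {a b : ℤ_[p]ˣ} (ha : IsOfFinOrder a)
    (hb : IsOfFinOrder b) (h : res a = res b) : a = b := by
  have h1 : res (a * b⁻¹) = 1 := by
    rw [show a * b⁻¹ = a * b⁻¹ by rfl]
    have : res a * (res b)⁻¹ = 1 := by rw [h, mul_inv_cancel]
    rw [← this]
    simp [res]
  rw [res_eq_one_iff] at h1
  have h2 : a * b⁻¹ = 1 := torsion_one_unit_eq_one hodd (ha.mul hb.inv) h1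
  calc a = a * b⁻¹ * b := by rw [mul_assoc, inv_mul_cancel, mul_one]
    _ = b := by rw [h2, one_mul]

/-- if orderOf a = d' (a torsion) and b^d' = 1 then b is a power of a -/
lemma pow_eq_one_mem_powers (hodd : Odd p) {a b : ℤ_[p]ˣ} (ha : IsOfFinOrder a)
    {d' : ℕ} (hd : orderOf a = d') (hb : b ^ d' = 1) : ∃ i : ℕ, b = a ^ i := by
  classical
  have hd0 : 0 < d' := hd ▸ ha.orderOf_pos
  have hbfin : IsOfFinOrder b := isOfFinOrder_of_pow_eq_one hd0 hb
  set A := res a with hA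
  set B := res b with hB
  have hordA : orderOf A = d' := by
    rw [← hd, hA]
    have h' := orderOf_eq_dd_of_finOrder hodd ha
    rw [dd] at h'
    rw [h']
  have hBpow : B ^ d' = 1 := by rw [hB, ← res_pow, hb]; simp [res]
  -- in the cyclic group (ZMod p)ˣ, B ∈ zpowers A by counting
  have hmem : B ∈ Subgroup.zpowers A := by
    have hcard : Fintype.card (Subgroup.zpowers A) = d' := by
      rw [Fintype.card_zpowers, hordA]
    set S : Finset (ZMod p)ˣ := Finset.univ.filter (fun g => g ^ d' = 1) with hS
    have hSle : S.card ≤ d' := IsCyclic.card_pow_eq_one_le hd0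
    have hsub : ((Subgroup.zpowers A : Subgroup (ZMod p)ˣ) : Set (ZMod p)ˣ).toFinset ⊆ S := by
      intro g hg
      rw [Set.mem_toFinset] at hg
      obtain ⟨i, hi⟩ := Subgroup.mem_zpowers_iff.mp hg
      rw [hS, Finset.mem_filter]
      refine ⟨Finset.mem_univ _, ?_⟩
      have hAd : A ^ d' = 1 := by rw [← hordA]; exact pow_orderOf_eq_one A
      rw [← hi, ← zpow_natCast, ← zpow_mul, mul_comm, zpow_mul]
      norm_cast
      rw [hAd]
      simp
    have hcard2 : ((Subgroup.zpowers A : Subgroup (ZMod p)ˣ) : Set (ZMod p)ˣ).toFinset.card = d' := by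
      rw [Set.toFinset_card]; rw [← hcard]; congr 1
    have heq : ((Subgroup.zpowers A : Subgroup (ZMod p)ˣ) : Set (ZMod p)ˣ).toFinset = S :=
      Finset.eq_of_subset_of_card_le hsub (by omega)
    have hBS : B ∈ S := by rw [hS, Finset.mem_filter]; exact ⟨Finset.mem_univ _, hBpow⟩
    rw [← heq, Set.mem_toFinset] at hBS
    exact hBS
  obtain ⟨i, hi⟩ := Subgroup.mem_zpowers_iff.mp hmem
  -- reduce the integer power to a natural power using orderOf
  obtain ⟨j, hj⟩ : ∃ j : ℕ, A ^ j = B := by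
    have := hi
    refine ⟨(i % (d' : ℤ)).toNat, ?_⟩
    have hmod : A ^ ((i % (d':ℤ)).toNat : ℤ) = A ^ i := by
      rw [Int.toNat_of_nonneg (Int.emod_nonneg i (by exact_mod_cast hd0.ne'))]
      have hAd : A ^ d' = 1 := by rw [← hordA]; exact pow_orderOf_eq_one A
      conv_rhs => rw [← Int.emod_add_mul_ediv i (d':ℤ)]
      rw [zpow_add, zpow_mul]
      norm_cast
      rw [hAd]
      simp
    rw [← hi, ← hmod, zpow_natCast]
  refine ⟨j, ?_⟩
  apply torsion_eq_of_res_eq hodd hbfin (ha.pow)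
  rw [res_pow, ← hA, hj, hB]

/-- binomial expansion remainder: (1+y)^j = 1 + j y + y^2 E -/
lemma one_add_pow_eq (y : ℤ_[p]) (j : ℕ) :
    ∃ E : ℤ_[p], (1 + y) ^ j = 1 + (j:ℤ_[p]) * y + y ^ 2 * E := by
  induction j with
  | zero => exact ⟨0, by simp⟩
  | succ j ih =>
    obtain ⟨E, hE⟩ := ih
    refine ⟨E + (j:ℤ_[p]) + y * E, ?_⟩
    rw [pow_succ, hE]
    push_cast
    ring

/-- 1-unit approximation: if w is a 1-unit of exact level n and v ≡ 1 mod p^n,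
then v can be approximated by powers of w -/
lemma one_unit_approx (hodd : Odd p) {w v : ℤ_[p]ˣ} {n : ℕ} (hn : 1 ≤ n)
    (hw : Ediv ((w:ℤ_[p]) - 1) n) (hv : (p:ℤ_[p])^n ∣ (v:ℤ_[p]) - 1) (k : ℕ) :
    ∃ c : ℕ, (p:ℤ_[p])^(n + k) ∣ (w:ℤ_[p])^c - (v:ℤ_[p]) := by
  have hw1 : (p:ℤ_[p]) ∣ (w:ℤ_[p]) - 1 := (dvd_pow_self (p:ℤ_[p]) (by omega : n ≠ 0)).trans hw.1
  induction k with
  | zero =>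
    refine ⟨0, ?_⟩
    rw [pow_zero]
    rw [show (1:ℤ_[p]) - (v:ℤ_[p]) = -(((v:ℤ_[p])) - 1) by ring, add_zero]
    exact hv.neg_right
  | succ k ih =>
    obtain ⟨c, hc⟩ := ih
    set K := n + k with hK
    -- w^(p^k) = 1 + p^K * r with r a unit
    obtain ⟨c₁, hc₁⟩ := pow_p_pow_sub_one hodd hw1 k
    obtain ⟨s, hs⟩ := hw.1
    have hsu : IsUnit s := by
      rw [isUnit_iff_not_dvd]
      intro hdvd
      apply hw.2
      obtain ⟨t, ht⟩ := hdvd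
      exact ⟨t, by rw [hs, ht, pow_succ]; ring⟩
    set r : ℤ_[p] := s * (1 + (p:ℤ_[p]) * c₁) with hr
    have hru : IsUnit r := hsu.mul (isUnit_one_add_p_mul c₁)
    have hwp : (w:ℤ_[p])^(p^k) = 1 + (p:ℤ_[p])^K * r := by
      have : (w:ℤ_[p])^(p^k) - 1 = (p:ℤ_[p])^K * r := by
        rw [hc₁, hs, hr, hK]
        rw [pow_add]
        ring
      linear_combination this
    -- defect g
    obtain ⟨g, hg⟩ := hc
    -- choose j
    have hWcu : IsUnit ((w:ℤ_[p])^c) := (w.isUnit.pow c)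
    have hrwu : IsUnit (r * (w:ℤ_[p])^c) := hru.mul hWcu
    have hρ : PadicInt.toZMod (r * (w:ℤ_[p])^c) ≠ 0 := by
      intro h0
      rw [← dvd_iff_toZMod_eq_zero] at h0
      rw [isUnit_iff_not_dvd] at hrwu
      exact hrwu h0
    set ρ : ZMod p := PadicInt.toZMod (r * (w:ℤ_[p])^c) with hρdef
    set jz : ZMod p := (- PadicInt.toZMod g) * ρ⁻¹ with hjz
    set j : ℕ := jz.val with hj
    have hjcast : (PadicInt.toZMod (j:ℤ_[p]) : ZMod p) = jz := by
      rw [map_natCast]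
      haveI : NeZero p := ⟨hp.out.ne_zero⟩
      simp [hj, ZMod.natCast_val, ZMod.cast_id]
    -- the congruence p ∣ g + j * r * w^c
    have hkey : (p:ℤ_[p]) ∣ g + (j:ℤ_[p]) * (r * (w:ℤ_[p])^c) := by
      rw [dvd_iff_toZMod_eq_zero, map_add, map_mul, hjcast, hjz, ← hρdef]
      field_simp
      ring
    refine ⟨c + j * p^k, ?_⟩
    obtain ⟨E, hE⟩ := one_add_pow_eq ((p:ℤ_[p])^K * r) j
    have hexp : (w:ℤ_[p])^(c + j * p^k) = (w:ℤ_[p])^c * ((1 + (p:ℤ_[p])^K * r))^j := by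
      rw [pow_add, mul_comm j (p^k), pow_mul, hwp]
    rw [hexp, hE]
    obtain ⟨G, hG⟩ := hkey
    have hfinal : (w:ℤ_[p])^c * (1 + (j:ℤ_[p]) * ((p:ℤ_[p])^K * r) + ((p:ℤ_[p])^K * r)^2 * E) - (v:ℤ_[p])
        = (p:ℤ_[p])^(K+1) * (G + (p:ℤ_[p])^(K - 1) * ((w:ℤ_[p])^c * r^2 * E)) := by
      have h2K : (p:ℤ_[p])^(K+1) * (p:ℤ_[p])^(K-1) = ((p:ℤ_[p])^K)^2 := by
        rw [← pow_add, ← pow_mul]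
        congr 1
        omega
      calc (w:ℤ_[p])^c * (1 + (j:ℤ_[p]) * ((p:ℤ_[p])^K * r) + ((p:ℤ_[p])^K * r)^2 * E) - (v:ℤ_[p])
          = ((w:ℤ_[p])^c - (v:ℤ_[p])) + (p:ℤ_[p])^K * ((j:ℤ_[p]) * (r * (w:ℤ_[p])^c))
            + ((p:ℤ_[p])^K)^2 * ((w:ℤ_[p])^c * r^2 * E) := by ring
        _ = (p:ℤ_[p])^K * (g + (j:ℤ_[p]) * (r * (w:ℤ_[p])^c))
            + ((p:ℤ_[p])^K)^2 * ((w:ℤ_[p])^c * r^2 * E) := by rw [hg]; ring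
        _ = (p:ℤ_[p])^K * ((p:ℤ_[p]) * G) + ((p:ℤ_[p])^K)^2 * ((w:ℤ_[p])^c * r^2 * E) := by rw [hG]
        _ = (p:ℤ_[p])^(K+1) * (G + (p:ℤ_[p])^(K - 1) * ((w:ℤ_[p])^c * r^2 * E)) := by
            rw [mul_add, ← h2K]
            ring
    rw [show n + (k+1) = K + 1 by omega]
    exact ⟨_, hfinal⟩

/-- full approximation: if z lies in G(dd x, nn x), then z is approximated by powers of x -/
lemma full_approx (hodd : Odd p) {x z : ℤ_[p]ˣ} (hx : ¬ IsOfFinOrder x)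
    (hz : (p:ℤ_[p])^(nn x) ∣ (z:ℤ_[p])^(dd x) - 1) (k : ℕ) :
    ∃ m : ℕ, (p:ℤ_[p])^k ∣ ((x:ℤ_[p]))^m - (z:ℤ_[p]) := by
  set d := dd x with hd
  set n := nn x with hn
  have hn1 : 1 ≤ n := nn_pos hx
  have hd0 : 0 < d := dd_pos x
  have hpd : ¬ p ∣ d := not_p_dvd_dd x
  have hEx : Ediv ((x:ℤ_[p])^d - 1) n := nn_Ediv hx
  obtain ⟨ux, vx, hux, hvx, hxe⟩ :=
    teichmuller_decomposition hodd (dd_dvd_p_sub_one x) hn1 hEx.1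
  obtain ⟨uz, vz, huz, hvz, hze⟩ :=
    teichmuller_decomposition hodd (dd_dvd_p_sub_one x) hn1 hz
  have hvx1 : (p:ℤ_[p]) ∣ (vx:ℤ_[p]) - 1 :=
    (dvd_pow_self (p:ℤ_[p]) (by omega : n ≠ 0)).trans hvx
  have hvz1 : (p:ℤ_[p]) ∣ (vz:ℤ_[p]) - 1 :=
    (dvd_pow_self (p:ℤ_[p]) (by omega : n ≠ 0)).trans hvz
  have huxfin : IsOfFinOrder ux := isOfFinOrder_of_pow_eq_one hd0 hux
  -- orderOf ux = d
  have hresx : res ux = res x := by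
    rw [hxe, res_mul]
    rw [(res_eq_one_iff vx).mpr hvx1, mul_one]
  have hordux : orderOf ux = d := by
    rw [orderOf_eq_dd_of_finOrder hodd huxfin, dd, hresx]
    rfl
  obtain ⟨a, ha⟩ := pow_eq_one_mem_powers hodd huxfin hordux huz
  -- Ediv (vx - 1) n
  have hvxE : Ediv ((vx:ℤ_[p]) - 1) n := by
    refine ⟨hvx, fun hcon => ?_⟩
    apply hEx.2
    have hxpow : (x:ℤ_[p])^d = (vx:ℤ_[p])^d := by
      have h1 : x ^ d = vx ^ d := by
        rw [hxe, mul_pow, hux, one_mul]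
      calc (x:ℤ_[p])^d = ((x^d : ℤ_[p]ˣ) : ℤ_[p]) := by simp
        _ = ((vx^d : ℤ_[p]ˣ) : ℤ_[p]) := by rw [h1]
        _ = (vx:ℤ_[p])^d := by simp
    rw [hxpow, pow_dvd_pow_sub_one_iff_coprime hvx1 hpd]
    exact hcon
  -- approximate vz by powers of vx
  obtain ⟨c, hc⟩ := one_unit_approx hodd hn1 hvxE hvz k
  -- period
  obtain ⟨c₂, hc₂⟩ := pow_p_pow_sub_one hodd hvx1 k
  have hperiod : (p:ℤ_[p])^k ∣ (vx:ℤ_[p])^(p^k) - 1 := by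
    rw [hc₂]
    exact Dvd.dvd.mul_left ⟨(1 + (p:ℤ_[p]) * c₂), rfl⟩ _
  -- CRT
  have hcop : (p^k).Coprime d := Nat.Coprime.pow_left k (hp.out.coprime_iff_not_dvd.mpr hpd)
  obtain ⟨m₀, hm₀1, hm₀2⟩ := Nat.chineseRemainder hcop c a
  set M : ℕ := m₀ + d * p^k * (a + c + 1) with hM
  have hMa : M ≡ a [MOD d] := by
    show M % d = a % d
    have he : M = m₀ + (p^k * (a+c+1)) * d := by rw [hM]; ring
    rw [he, Nat.add_mul_mod_self_right]
    exact hm₀2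
  have hMc : M ≡ c [MOD p^k] := by
    show M % p^k = c % p^k
    have he : M = m₀ + (d * (a+c+1)) * p^k := by rw [hM]; ring
    rw [he, Nat.add_mul_mod_self_right]
    exact hm₀1
  have hMge : a ≤ M ∧ c ≤ M := by
    have h1 : 1 ≤ d * p^k := Nat.mul_pos hd0 (pow_pos hp.out.pos k)
    have h2 : 1 * (a + c + 1) ≤ d * p^k * (a + c + 1) :=
      Nat.mul_le_mul_right _ h1
    rw [one_mul] at h2
    omega
  obtain ⟨q1, hq1⟩ : d ∣ M - a := (Nat.modEq_iff_dvd' hMge.1).mp hMa.symm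
  obtain ⟨q2, hq2⟩ : p^k ∣ M - c := (Nat.modEq_iff_dvd' hMge.2).mp hMc.symm
  -- u part
  have huxM : ux ^ M = ux ^ a := by
    have hMeq : M = a + d * q1 := by omega
    rw [hMeq, pow_add, pow_mul, hux, one_pow, mul_one]
  refine ⟨M, ?_⟩
  have hxM : (x:ℤ_[p])^M = ((ux^a : ℤ_[p]ˣ) : ℤ_[p]) * ((vx^M : ℤ_[p]ˣ) : ℤ_[p]) := by
    calc (x:ℤ_[p])^M = ((x^M : ℤ_[p]ˣ) : ℤ_[p]) := by simp
      _ = ((ux^M * vx^M : ℤ_[p]ˣ) : ℤ_[p]) := by rw [hxe, mul_pow]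
      _ = _ := by rw [huxM]; push_cast; ring
  have hZ : (z:ℤ_[p]) = ((ux^a : ℤ_[p]ˣ) : ℤ_[p]) * (vz:ℤ_[p]) := by
    rw [hze, ha]; push_cast; ring
  rw [hxM, hZ, ← mul_sub]
  apply Dvd.dvd.mul_left
  -- p^k ∣ vx^M - vz
  have hsplit : ((vx^M : ℤ_[p]ˣ) : ℤ_[p]) - (vz:ℤ_[p]) =
      (vx:ℤ_[p])^c * ((vx:ℤ_[p])^(M-c) - 1) + ((vx:ℤ_[p])^c - (vz:ℤ_[p])) := by
    have h0 : ((vx^M : ℤ_[p]ˣ) : ℤ_[p]) = (vx:ℤ_[p])^M := by simp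
    have hM2 : (vx:ℤ_[p])^M = (vx:ℤ_[p])^c * (vx:ℤ_[p])^(M-c) := by
      rw [← pow_add]; congr 1; omega
    rw [h0, hM2]
    ring
  rw [hsplit]
  apply dvd_add
  · apply Dvd.dvd.mul_left
    rw [hq2, pow_mul]
    have hgen : ((vx:ℤ_[p])^(p^k) - 1) ∣ (((vx:ℤ_[p])^(p^k))^q2 - 1) := by
      have := sub_dvd_pow_sub_pow ((vx:ℤ_[p])^(p^k)) 1 q2
      simpa using this
    exact hperiod.trans hgen
  · exact (pow_dvd_pow _ (by omega : k ≤ n + k)).trans hc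

/-- density: z lies in the closure of the powers of x -/
lemma mem_closure_zpowers (hodd : Odd p) {x z : ℤ_[p]ˣ} (hx : ¬ IsOfFinOrder x)
    (hz : (p:ℤ_[p])^(nn x) ∣ (z:ℤ_[p])^(dd x) - 1) :
    z ∈ closure ((Subgroup.zpowers x : Subgroup ℤ_[p]ˣ) : Set ℤ_[p]ˣ) := by
  have hind := Units.isInducing_embedProduct (M := ℤ_[p])
  rw [hind.closure_eq_preimage_closure_image]
  rw [Set.mem_preimage]
  rw [Metric.mem_closure_iff]
  intro ε hε
  -- choose k with p^{-k} < ε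
  have hp1 : (1:ℝ) < (p:ℝ) := by exact_mod_cast hp.out.one_lt
  obtain ⟨k, hk⟩ := exists_pow_lt_of_lt_one hε (by rw [inv_lt_one_iff₀]; right; exact hp1 :
    (p:ℝ)⁻¹ < 1)
  obtain ⟨m, hm⟩ := full_approx hodd hx hz k
  refine ⟨Units.embedProduct _ (x ^ m), Set.mem_image_of_mem _ ?_, ?_⟩
  · exact ⟨(m:ℤ), by exact zpow_natCast x m⟩
  · rw [Units.embedProduct_apply, Units.embedProduct_apply, Prod.dist_eq]
    have hnorm1 : dist ((z:ℤ_[p])) (((x^m : ℤ_[p]ˣ) : ℤ_[p])) < ε := by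
      rw [dist_eq_norm]
      have h1 : ‖(z:ℤ_[p]) - ((x^m : ℤ_[p]ˣ) : ℤ_[p])‖ ≤ (p:ℝ)^(-(k:ℤ)) := by
        rw [PadicInt.norm_le_pow_iff_mem_span_pow, Ideal.mem_span_singleton]
        have : (z:ℤ_[p]) - ((x^m : ℤ_[p]ˣ) : ℤ_[p]) = -((x:ℤ_[p])^m - (z:ℤ_[p])) := by
          push_cast; ring
        rw [this]
        exact hm.neg_right
      calc ‖(z:ℤ_[p]) - ((x^m : ℤ_[p]ˣ) : ℤ_[p])‖ ≤ (p:ℝ)^(-(k:ℤ)) := h1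
        _ = ((p:ℝ)⁻¹)^k := by rw [zpow_neg, zpow_natCast, inv_pow]
        _ < ε := hk
    have hnorm2 : dist (MulOpposite.op ((z⁻¹ : ℤ_[p]ˣ) : ℤ_[p]))
        (MulOpposite.op (((x^m : ℤ_[p]ˣ)⁻¹ : ℤ_[p]ˣ) : ℤ_[p])) < ε := by
      rw [MulOpposite.dist_op, dist_eq_norm]
      have hfactor : ((z⁻¹ : ℤ_[p]ˣ) : ℤ_[p]) - (((x^m : ℤ_[p]ˣ)⁻¹ : ℤ_[p]ˣ) : ℤ_[p])
          = ((z⁻¹ : ℤ_[p]ˣ) : ℤ_[p]) * (((x^m : ℤ_[p]ˣ) : ℤ_[p]) - (z:ℤ_[p]))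
            * (((x^m : ℤ_[p]ˣ)⁻¹ : ℤ_[p]ˣ) : ℤ_[p]) := by
        have hz1 : ((z⁻¹ : ℤ_[p]ˣ) : ℤ_[p]) * (z:ℤ_[p]) = 1 := by
          rw [← Units.val_mul, inv_mul_cancel]; rfl
        have hx1 : ((x^m : ℤ_[p]ˣ) : ℤ_[p]) * (((x^m : ℤ_[p]ˣ)⁻¹ : ℤ_[p]ˣ) : ℤ_[p]) = 1 := by
          rw [← Units.val_mul, mul_inv_cancel]; rfl
        calc ((z⁻¹ : ℤ_[p]ˣ) : ℤ_[p]) - (((x^m : ℤ_[p]ˣ)⁻¹ : ℤ_[p]ˣ) : ℤ_[p])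
            = ((z⁻¹ : ℤ_[p]ˣ) : ℤ_[p]) * (((x^m : ℤ_[p]ˣ) : ℤ_[p]) * (((x^m : ℤ_[p]ˣ)⁻¹ : ℤ_[p]ˣ) : ℤ_[p]))
              - (((z⁻¹ : ℤ_[p]ˣ) : ℤ_[p]) * (z:ℤ_[p])) * (((x^m : ℤ_[p]ˣ)⁻¹ : ℤ_[p]ˣ) : ℤ_[p]) := by
              rw [hz1, hx1]; ring
          _ = _ := by ring
      rw [hfactor]
      have hle : ‖((z⁻¹ : ℤ_[p]ˣ) : ℤ_[p]) * (((x^m : ℤ_[p]ˣ) : ℤ_[p]) - (z:ℤ_[p]))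
          * (((x^m : ℤ_[p]ˣ)⁻¹ : ℤ_[p]ˣ) : ℤ_[p])‖ = ‖((x^m : ℤ_[p]ˣ) : ℤ_[p]) - (z:ℤ_[p])‖ := by
        rw [norm_mul, norm_mul, PadicInt.norm_units, PadicInt.norm_units, one_mul, mul_one]
      rw [hle]
      have h1 : ‖((x^m : ℤ_[p]ˣ) : ℤ_[p]) - (z:ℤ_[p])‖ ≤ (p:ℝ)^(-(k:ℤ)) := by
        rw [PadicInt.norm_le_pow_iff_mem_span_pow, Ideal.mem_span_singleton]
        have : ((x^m : ℤ_[p]ˣ) : ℤ_[p]) - (z:ℤ_[p]) = (x:ℤ_[p])^m - (z:ℤ_[p]) := by push_cast; ring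
        rw [this]
        exact hm
      calc ‖((x^m : ℤ_[p]ˣ) : ℤ_[p]) - (z:ℤ_[p])‖ ≤ (p:ℝ)^(-(k:ℤ)) := h1
        _ = ((p:ℝ)⁻¹)^k := by rw [zpow_neg, zpow_natCast, inv_pow]
        _ < ε := hk
    exact max_lt hnorm1 hnorm2

lemma not_finOrder_pow {x : ℤ_[p]ˣ} (hx : ¬ IsOfFinOrder x) {k : ℕ} (hk : 0 < k) :
    ¬ IsOfFinOrder (x ^ k) := by
  intro h
  obtain ⟨N, hN, hNe⟩ := isOfFinOrder_iff_pow_eq_one.mp h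
  rw [← pow_mul] at hNe
  exact hx (isOfFinOrder_iff_pow_eq_one.mpr ⟨k * N, by positivity, hNe⟩)

lemma val_pow_pow (x : ℤ_[p]ˣ) (a b : ℕ) :
    ((x^a : ℤ_[p]ˣ) : ℤ_[p])^b = (x:ℤ_[p])^(a*b) := by
  rw [pow_mul]; push_cast; ring

/-- invariants of x^p -/
lemma inv_pow_p (hodd : Odd p) {x : ℤ_[p]ˣ} (hx : ¬ IsOfFinOrder x) :
    ¬ IsOfFinOrder (x ^ p) ∧ dd (x ^ p) = dd x ∧ nn (x ^ p) = nn x + 1 := by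
  have hp0 : 0 < p := hp.out.pos
  have hfin : ¬ IsOfFinOrder (x ^ p) := not_finOrder_pow hx hp0
  have hdd : dd (x ^ p) = dd x := by
    rw [dd, res_pow]
    have hfrob : (res x) ^ p = res x := by
      have h1 : (res x) ^ (p - 1) = 1 := by
        have := pow_card_eq_one (G := (ZMod p)ˣ) (x := res x)
        rwa [ZMod.card_units] at this
      calc (res x)^p = (res x)^(p-1) * res x := by
            rw [← pow_succ]; congr 1; omega
        _ = res x := by rw [h1, one_mul]
    rw [hfrob, dd]
  refine ⟨hfin, hdd, ?_⟩
  apply nn_eq_of_Ediv hfin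
  rw [hdd]
  have hXd : (p:ℤ_[p]) ∣ (x:ℤ_[p])^(dd x) - 1 := p_dvd_pow_dd_sub_one x
  obtain ⟨c, hc⟩ := pow_p_sub_one hodd hXd
  have hEx := nn_Ediv hx
  have hval : ((x^p : ℤ_[p]ˣ) : ℤ_[p])^(dd x) - 1 = ((x:ℤ_[p])^(dd x))^p - 1 := by
    rw [val_pow_pow, ← pow_mul, mul_comm]
  rw [hval, hc]
  have h2 : ((x:ℤ_[p])^(dd x) - 1) * ((p:ℤ_[p]) * (1 + (p:ℤ_[p]) * c))
      = (((x:ℤ_[p])^(dd x) - 1) * (p:ℤ_[p])) * (1 + (p:ℤ_[p]) * c) := by ring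
  rw [h2]
  exact Ediv_mul_unit (Ediv_p_mul hEx) (isUnit_one_add_p_mul c)

/-- invariants of x^(p^j) -/
lemma inv_pow_p_pow (hodd : Odd p) {x : ℤ_[p]ˣ} (hx : ¬ IsOfFinOrder x) (j : ℕ) :
    ¬ IsOfFinOrder (x ^ (p^j)) ∧ dd (x ^ (p^j)) = dd x ∧ nn (x ^ (p^j)) = nn x + j := by
  induction j with
  | zero => simpa using hx
  | succ j ih =>
    have hrw : x ^ (p^(j+1)) = (x ^ (p^j)) ^ p := by rw [← pow_mul, pow_succ]
    obtain ⟨ih1, ih2, ih3⟩ := ih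
    obtain ⟨h1, h2, h3⟩ := inv_pow_p hodd ih1
    rw [hrw]
    exact ⟨h1, by rw [h2, ih2], by rw [h3, ih3, Nat.add_assoc]⟩

/-- invariants of x^(d/d') for d' ∣ dd x -/
lemma inv_pow_div (hodd : Odd p) {x : ℤ_[p]ˣ} (hx : ¬ IsOfFinOrder x) {d' : ℕ} (hd' : d' ∣ dd x)
    (hd'0 : 0 < d') :
    ¬ IsOfFinOrder (x ^ (dd x / d')) ∧ dd (x ^ (dd x / d')) = d' ∧ nn (x ^ (dd x / d')) = nn x := by
  have hd0 := dd_pos x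
  have hq0 : 0 < dd x / d' := Nat.div_pos (Nat.le_of_dvd hd0 hd') hd'0
  have hfin := not_finOrder_pow hx hq0
  have hdd : dd (x ^ (dd x / d')) = d' := by
    rw [dd, res_pow]
    rw [orderOf_pow' _ (by omega : dd x / d' ≠ 0)]
    have : orderOf (res x) = dd x := rfl
    rw [this, Nat.gcd_eq_right (Nat.div_dvd_of_dvd hd'), Nat.div_div_self hd' (by omega)]
  refine ⟨hfin, hdd, ?_⟩
  apply nn_eq_of_Ediv hfin
  rw [hdd]
  have hval : ((x^(dd x / d') : ℤ_[p]ˣ) : ℤ_[p])^d' - 1 = (x:ℤ_[p])^(dd x) - 1 := by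
    rw [val_pow_pow, Nat.div_mul_cancel hd']
  rw [hval]
  exact nn_Ediv hx

/-- invariants of u * w for torsion u and 1-unit w -/
lemma inv_mul_torsion (hodd : Odd p) {u w : ℤ_[p]ˣ} (hu : IsOfFinOrder u)
    (hw : ¬ IsOfFinOrder w) (hw1 : dd w = 1) :
    ¬ IsOfFinOrder (u * w) ∧ dd (u * w) = orderOf u ∧ nn (u * w) = nn w := by
  have hresw : res w = 1 := orderOf_eq_one_iff.mp hw1
  have hwd : (p:ℤ_[p]) ∣ (w:ℤ_[p]) - 1 := (res_eq_one_iff w).mp hresw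
  set e' := orderOf u with he'
  have he'0 : 0 < e' := hu.orderOf_pos
  have hpe' : ¬ p ∣ e' := by
    rw [he', orderOf_eq_dd_of_finOrder hodd hu]
    exact not_p_dvd_dd u
  have hfin : ¬ IsOfFinOrder (u * w) := by
    intro h
    exact hw (by
      have : w = u⁻¹ * (u * w) := by rw [← mul_assoc, inv_mul_cancel, one_mul]
      rw [this]
      exact (hu.inv).mul h)
  have hdd : dd (u * w) = e' := by
    rw [dd, res_mul, hresw, mul_one, he', orderOf_eq_dd_of_finOrder hodd hu]
    rfl
  refine ⟨hfin, hdd, ?_⟩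
  apply nn_eq_of_Ediv hfin
  rw [hdd]
  -- (u*w)^e' = w^e'
  have hpow : (u * w)^e' = w^e' := by
    rw [mul_pow, he', pow_orderOf_eq_one, one_mul]
  have hval : (((u*w)^e' : ℤ_[p]ˣ) : ℤ_[p]) = (w:ℤ_[p])^e' := by
    rw [hpow]; push_cast; ring
  have hval2 : ((u*w:ℤ_[p]ˣ) : ℤ_[p])^e' - 1 = (w:ℤ_[p])^e' - 1 := by
    rw [← hval]; push_cast; ring
  rw [hval2]
  -- Ediv (w^e' - 1) (nn w)
  have hEw : Ediv ((w:ℤ_[p]) - 1) (nn w) := by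
    have := nn_Ediv hw
    rwa [hw1, pow_one] at this
  exact Ediv_pow_coprime hwd hpe' hEw

end St9

open St9 in
/-- Let `ℓ` be an odd prime and `K ≤ ℤ_ℓˣ` a subgroup such that membership in `K`
depends only on the closed subgroup generated by an element. If `K` contains an
element of infinite order, then `K` is the internal direct product `μ_e · H_n`
for some divisor `e` of `ℓ - 1` and some `n ≥ 1`, where `μ_e` is the subgroup of
`e`-th roots of unity and `H_n = {q : v_ℓ(q − 1) ≥ n}`. -/
theorem stmt9 (ℓ : ℕ) [Fact ℓ.Prime] (hodd : Odd ℓ) (K : Subgroup ℤ_[ℓ]ˣ)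
    (hcl : ∀ x y : ℤ_[ℓ]ˣ,
      closure ((Subgroup.zpowers x : Subgroup ℤ_[ℓ]ˣ) : Set ℤ_[ℓ]ˣ) =
        closure ((Subgroup.zpowers y : Subgroup ℤ_[ℓ]ˣ) : Set ℤ_[ℓ]ˣ) →
      (x ∈ K ↔ y ∈ K))
    (hinf : ∃ x ∈ K, ¬ IsOfFinOrder x) :
    ∃ e n : ℕ, e ∣ ℓ - 1 ∧ 1 ≤ n ∧
      (K : Set ℤ_[ℓ]ˣ) = {z : ℤ_[ℓ]ˣ | ∃ u v : ℤ_[ℓ]ˣ,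
        u ^ e = 1 ∧ (ℓ : ℤ_[ℓ]) ^ n ∣ ((v : ℤ_[ℓ]) - 1) ∧ z = u * v} ∧
      (∀ u : ℤ_[ℓ]ˣ, u ^ e = 1 → (ℓ : ℤ_[ℓ]) ^ n ∣ ((u : ℤ_[ℓ]) - 1) → u = 1) := by
  classical
  have hl3 : 3 ≤ ℓ := by
    have h2 := (Fact.out : ℓ.Prime).two_le
    rcases hodd with ⟨t, ht⟩
    omega
  obtain ⟨x₀, hx₀K, hx₀⟩ := hinf
  -- closure inclusion from approximation
  have hclosure_le : ∀ x z : ℤ_[ℓ]ˣ, ¬IsOfFinOrder x →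
      ((ℓ:ℤ_[ℓ])^(nn x) ∣ (z:ℤ_[ℓ])^(dd x) - 1) →
      closure ((Subgroup.zpowers z : Subgroup ℤ_[ℓ]ˣ) : Set ℤ_[ℓ]ˣ) ⊆
      closure ((Subgroup.zpowers x : Subgroup ℤ_[ℓ]ˣ) : Set ℤ_[ℓ]ˣ) := by
    intro x z hx hz
    have hmem : z ∈ (Subgroup.zpowers x).topologicalClosure := by
      have h := mem_closure_zpowers hodd hx hz
      rw [← Subgroup.topologicalClosure_coe] at h
      exact h
    have hle : Subgroup.zpowers z ≤ (Subgroup.zpowers x).topologicalClosure :=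
      (Subgroup.zpowers_le).mpr hmem
    have h2 : closure ((Subgroup.zpowers z : Subgroup ℤ_[ℓ]ˣ) : Set ℤ_[ℓ]ˣ) ⊆
        closure (((Subgroup.zpowers x).topologicalClosure : Subgroup ℤ_[ℓ]ˣ) : Set ℤ_[ℓ]ˣ) :=
      closure_mono hle
    rwa [Subgroup.topologicalClosure_coe, closure_closure] at h2
  -- membership transfer for equal invariants
  have htrans : ∀ x z : ℤ_[ℓ]ˣ, ¬IsOfFinOrder x → ¬IsOfFinOrder z → dd x = dd z →
      nn x = nn z → x ∈ K → z ∈ K := by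
    intro x z hx hz hdd hnn hxK
    have h1 := hclosure_le x z hx (by
      have := (nn_Ediv hz).1
      rwa [← hdd, ← hnn] at this)
    have h2 := hclosure_le z x hz (by
      have := (nn_Ediv hx).1
      rwa [hdd, hnn] at this)
    exact (hcl x z (Set.Subset.antisymm h2 h1)).mp hxK
  -- main absorption step
  have hstep : ∀ x : ℤ_[ℓ]ˣ, x ∈ K → ¬IsOfFinOrder x →
      ∀ z : ℤ_[ℓ]ˣ, (ℓ:ℤ_[ℓ])^(nn x) ∣ (z:ℤ_[ℓ])^(dd x) - 1 → z ∈ K := by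
    intro x hxK hx z hz
    obtain ⟨u, v, hu, hv, hze⟩ :=
      teichmuller_decomposition hodd (dd_dvd_p_sub_one x) (nn_pos hx) hz
    have hxdK : x ^ (dd x) ∈ K := pow_mem hxK _
    have hxdfin : ¬ IsOfFinOrder (x ^ dd x) := not_finOrder_pow hx (dd_pos x)
    obtain ⟨-, hxd1, hxd2⟩ := by
      have h := inv_pow_div hodd hx (one_dvd (dd x)) one_pos
      rwa [Nat.div_one] at h
    have hvK : v ∈ K := by
      by_cases hv1 : v = 1
      · rw [hv1]; exact one_mem K
      · have hvp : (ℓ:ℤ_[ℓ]) ∣ (v:ℤ_[ℓ]) - 1 :=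
          (dvd_pow_self (ℓ:ℤ_[ℓ]) (by have := nn_pos hx; omega : nn x ≠ 0)).trans hv
        have hvfin : ¬ IsOfFinOrder v := fun h => hv1 (torsion_one_unit_eq_one hodd h hvp)
        have hddv : dd v = 1 := by
          rw [dd, orderOf_eq_one_iff]
          exact (res_eq_one_iff v).mpr hvp
        have hnnv : nn x ≤ nn v := by
          by_contra h
          have hE := nn_Ediv hvfin
          rw [hddv, pow_one] at hE
          exact hE.2 ((pow_dvd_pow _ (by omega)).trans hv)
        obtain ⟨hy1, hy2, hy3⟩ := inv_pow_p_pow hodd hxdfin (nn v - nn x)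
        exact htrans _ v hy1 hvfin (by rw [hy2, hxd1, hddv]) (by rw [hy3, hxd2]; omega)
          (pow_mem hxdK _)
    have huK : u ∈ K := by
      have hufin : IsOfFinOrder u := isOfFinOrder_of_pow_eq_one (dd_pos x) hu
      have he'0 : 0 < orderOf u := hufin.orderOf_pos
      have he'd : orderOf u ∣ dd x := orderOf_dvd_of_pow_eq_one hu
      obtain ⟨hy1, hy2, hy3⟩ := inv_mul_torsion hodd hufin hxdfin hxd1
      obtain ⟨hw1, hw2, hw3⟩ := inv_pow_div hodd hx he'd he'0
      have hyK : u * x ^ dd x ∈ K :=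
        htrans _ _ hw1 hy1 (by rw [hw2, hy2]) (by rw [hw3, hy3, hxd2]) (pow_mem hxK _)
      have hrw : u = (u * x ^ dd x) * (x ^ dd x)⁻¹ := by group
      rw [hrw]; exact mul_mem hyK (inv_mem hxdK)
    rw [hze]; exact mul_mem huK hvK
  -- the torsion exponent e
  set P : ℕ → Prop := fun d => ∃ u : ℤ_[ℓ]ˣ, u ∈ K ∧ IsOfFinOrder u ∧ orderOf u = d with hP
  have hP1 : P 1 := ⟨1, one_mem K, IsOfFinOrder.one, orderOf_one⟩
  have hl1 : 1 ≤ ℓ - 1 := by omega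
  set e : ℕ := Nat.findGreatest P (ℓ - 1) with he
  have he1 : 1 ≤ e := Nat.le_findGreatest hl1 hP1
  obtain ⟨ue, hueK, huefin, huee⟩ : P e := Nat.findGreatest_spec hl1 hP1
  have he_dvd : e ∣ ℓ - 1 := by
    rw [← huee, orderOf_eq_dd_of_finOrder hodd huefin]
    exact dd_dvd_p_sub_one ue
  -- all torsion orders in K divide e
  have hmax : ∀ u : ℤ_[ℓ]ˣ, u ∈ K → IsOfFinOrder u → orderOf u ∣ e := by
    intro u huK hufin
    have hcomm : Commute u ue := mul_comm u ue
    have h0u : orderOf u ≠ 0 := hufin.orderOf_pos.ne'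
    have h0e : orderOf ue ≠ 0 := huefin.orderOf_pos.ne'
    have hy := hcomm.orderOf_mul_pow_eq_lcm h0u h0e
    set y := u ^ (orderOf u / (orderOf u).factorizationLCMLeft (orderOf ue)) *
      ue ^ (orderOf ue / (orderOf u).factorizationLCMRight (orderOf ue)) with hydef
    have hyK : y ∈ K := mul_mem (pow_mem huK _) (pow_mem hueK _)
    have hyfin : IsOfFinOrder y := by
      rw [← orderOf_pos_iff]
      rw [hy]
      exact Nat.pos_of_ne_zero (Nat.lcm_ne_zero h0u h0e)
    have hydvd : orderOf y ∣ ℓ - 1 := by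
      rw [orderOf_eq_dd_of_finOrder hodd hyfin]
      exact dd_dvd_p_sub_one y
    have hyle : orderOf y ≤ e :=
      Nat.le_findGreatest (Nat.le_of_dvd (by omega) hydvd) ⟨y, hyK, hyfin, rfl⟩
    have hedvd : e ∣ orderOf y := by
      rw [hy, ← huee]
      exact Nat.dvd_lcm_right _ _
    have heeq : orderOf y = e :=
      le_antisymm hyle (Nat.le_of_dvd hyfin.orderOf_pos hedvd)
    rw [← heeq, hy]
    exact Nat.dvd_lcm_left _ _
  -- the minimal level m
  have hm_ex : ∃ n : ℕ, ∃ x : ℤ_[ℓ]ˣ, x ∈ K ∧ ¬IsOfFinOrder x ∧ nn x = n :=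
    ⟨nn x₀, x₀, hx₀K, hx₀, rfl⟩
  obtain ⟨xm, hxmK, hxmfin, hxmnn⟩ := Nat.find_spec hm_ex
  set m : ℕ := Nat.find hm_ex with hm
  have hm1 : 1 ≤ m := by rw [← hxmnn]; exact nn_pos hxmfin
  have hmmin : ∀ x : ℤ_[ℓ]ˣ, x ∈ K → ¬IsOfFinOrder x → m ≤ nn x := by
    intro x hxK hx
    by_contra h
    exact Nat.find_min hm_ex (by omega : nn x < m) ⟨x, hxK, hx, rfl⟩
  -- the canonical generator y₀ = ue * xm^(dd xm)
  have hwfin : ¬ IsOfFinOrder (xm ^ dd xm) := not_finOrder_pow hxmfin (dd_pos xm)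
  obtain ⟨-, hw1, hw2⟩ := by
    have h := inv_pow_div hodd hxmfin (one_dvd (dd xm)) one_pos
    rwa [Nat.div_one] at h
  obtain ⟨hy₀1, hy₀2, hy₀3⟩ := inv_mul_torsion hodd huefin hwfin hw1
  have hy₀K : ue * xm ^ dd xm ∈ K := mul_mem hueK (pow_mem hxmK _)
  have hy₀dd : dd (ue * xm ^ dd xm) = e := by rw [hy₀2, huee]
  have hy₀nn : nn (ue * xm ^ dd xm) = m := by rw [hy₀3, hw2, hxmnn]
  -- K = G(e, m)
  have hGsubK : ∀ z : ℤ_[ℓ]ˣ, (ℓ:ℤ_[ℓ])^m ∣ (z:ℤ_[ℓ])^e - 1 → z ∈ K := by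
    intro z hzG
    exact hstep _ hy₀K hy₀1 z (by rwa [hy₀dd, hy₀nn])
  have hKsubG : ∀ t : ℤ_[ℓ]ˣ, t ∈ K → (ℓ:ℤ_[ℓ])^m ∣ (t:ℤ_[ℓ])^e - 1 := by
    intro t htK
    by_cases htfin : IsOfFinOrder t
    · have h1 : t ^ e = 1 := orderOf_dvd_iff_pow_eq_one.mp (hmax t htK htfin)
      have h2 : (t:ℤ_[ℓ])^e = 1 := by
        calc (t:ℤ_[ℓ])^e = ((t^e : ℤ_[ℓ]ˣ) : ℤ_[ℓ]) := by simp
          _ = 1 := by rw [h1]; rfl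
      rw [h2, sub_self]
      exact dvd_zero _
    · obtain ⟨ut, vt, hut, hvt, hte⟩ :=
        teichmuller_decomposition hodd (dd_dvd_p_sub_one t) (nn_pos htfin) (nn_Ediv htfin).1
      have hutK : ut ∈ K := by
        apply hstep t htK htfin
        have : ((ut:ℤ_[ℓ]))^(dd t) = 1 := by
          calc ((ut:ℤ_[ℓ]))^(dd t) = ((ut^(dd t) : ℤ_[ℓ]ˣ) : ℤ_[ℓ]) := by simp
            _ = 1 := by rw [hut]; rfl
        rw [this, sub_self]
        exact dvd_zero _
      have hutfin : IsOfFinOrder ut := isOfFinOrder_of_pow_eq_one (dd_pos t) hut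
      have hvtp : (ℓ:ℤ_[ℓ]) ∣ (vt:ℤ_[ℓ]) - 1 :=
        (dvd_pow_self (ℓ:ℤ_[ℓ]) (by have := nn_pos htfin; omega : nn t ≠ 0)).trans hvt
      have hresut : res ut = res t := by
        rw [hte, res_mul, (res_eq_one_iff vt).mpr hvtp, mul_one]
      have hordut : orderOf ut = dd t := by
        rw [orderOf_eq_dd_of_finOrder hodd hutfin, dd, hresut]
        rfl
      have hdte : dd t ∣ e := by
        rw [← hordut]
        exact hmax ut hutK hutfin
      -- t^e = vt^e
      have hute : ut ^ e = 1 := by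
        obtain ⟨q, hq⟩ := hdte
        rw [hq, pow_mul, hut, one_pow]
      have hte2 : (t:ℤ_[ℓ])^e = (vt:ℤ_[ℓ])^e := by
        have h1 : t ^ e = vt ^ e := by
          rw [hte, mul_pow, hute, one_mul]
        calc (t:ℤ_[ℓ])^e = ((t^e : ℤ_[ℓ]ˣ) : ℤ_[ℓ]) := by simp
          _ = ((vt^e : ℤ_[ℓ]ˣ) : ℤ_[ℓ]) := by rw [h1]
          _ = (vt:ℤ_[ℓ])^e := by simp
      rw [hte2]
      have hdvd1 : ((vt:ℤ_[ℓ]) - 1) ∣ ((vt:ℤ_[ℓ])^e - 1) := by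
        have := sub_dvd_pow_sub_pow ((vt:ℤ_[ℓ])) 1 e
        simpa using this
      have hm_le : m ≤ nn t := hmmin t htK htfin
      exact ((pow_dvd_pow (ℓ:ℤ_[ℓ]) hm_le).trans hvt).trans hdvd1
  refine ⟨e, m, he_dvd, hm1, ?_, ?_⟩
  · ext z
    simp only [SetLike.mem_coe, Set.mem_setOf_eq]
    constructor
    · intro hzK
      exact teichmuller_decomposition hodd he_dvd hm1 (hKsubG z hzK)
    · rintro ⟨u, v, hu, hv, rfl⟩
      apply hGsubK
      have h1 : (u * v) ^ e = v ^ e := by rw [mul_pow, hu, one_mul]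
      have h2 : ((u*v : ℤ_[ℓ]ˣ) : ℤ_[ℓ])^e = (v:ℤ_[ℓ])^e := by
        calc ((u*v : ℤ_[ℓ]ˣ) : ℤ_[ℓ])^e = (((u*v)^e : ℤ_[ℓ]ˣ) : ℤ_[ℓ]) := by simp
          _ = ((v^e : ℤ_[ℓ]ˣ) : ℤ_[ℓ]) := by rw [h1]
          _ = (v:ℤ_[ℓ])^e := by simp
      rw [h2]
      have hdvd1 : ((v:ℤ_[ℓ]) - 1) ∣ ((v:ℤ_[ℓ])^e - 1) := by
        have := sub_dvd_pow_sub_pow ((v:ℤ_[ℓ])) 1 e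
        simpa using this
      exact hv.trans hdvd1
  · intro u hu hdvd
    have hufin : IsOfFinOrder u := isOfFinOrder_of_pow_eq_one (by omega) hu
    apply torsion_one_unit_eq_one hodd hufin
    exact (dvd_pow_self (ℓ:ℤ_[ℓ]) (by omega : m ≠ 0)).trans hdvd
end

section
/- Let K be a subgroup of ℤ_2^× with the closure property that membership in K depends only on the closed subgroup of ℤ_2^× generated by an element, and suppose K contains an element of infinite order. Then K has one of the following forms: H'_n, or ±H'_n (for some 2 ≤ n < ∞), or H'_n ∪ (−1 + 2^{n−1})H'_n (for some 3 ≤ n < ∞), where H'_n = {q ∈ ℤ_2^× : q ≡ 1 (mod 4) and v_2(q − 1) ≥ n}. -/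
/-- Membership predicate for `H'_n = {q ∈ ℤ_2ˣ : q ≡ 1 (mod 4) and v_2(q − 1) ≥ n}`,
expressed for elements of `ℤ_[2]`. -/
def stmt10H (n : ℕ) (y : ℤ_[2]) : Prop :=
  (4 : ℤ_[2]) ∣ (y - 1) ∧ (2 : ℤ_[2]) ^ n ∣ (y - 1)

namespace S10X

lemma two_prime : Prime (2 : ℤ_[2]) := by
  have := PadicInt.prime_p (p := 2); simpa using this

lemma dvd_iff_norm (t : ℕ) (y : ℤ_[2]) :
    (2:ℤ_[2])^t ∣ y ↔ ‖y‖ ≤ (2:ℝ)^(-(t:ℤ)) := by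
  have := PadicInt.norm_le_pow_iff_mem_span_pow (p := 2) y t
  rw [Ideal.mem_span_singleton] at this
  simpa using this.symm

lemma one_dvd_iff (y : ℤ_[2]) : (2:ℤ_[2]) ∣ y ↔ ‖y‖ < 1 :=
  (PadicInt.norm_lt_one_iff_dvd y).symm

lemma isUnit_of_not_dvd {y : ℤ_[2]} (h : ¬ (2:ℤ_[2]) ∣ y) : IsUnit y := by
  rw [PadicInt.isUnit_iff]
  rcases lt_or_eq_of_le (PadicInt.norm_le_one y) with h' | h'
  · exact absurd ((one_dvd_iff y).mpr h') h
  · exact h'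

lemma not_dvd_of_isUnit {y : ℤ_[2]} (h : IsUnit y) : ¬ (2:ℤ_[2]) ∣ y := by
  intro hd
  rw [one_dvd_iff] at hd
  rw [PadicInt.isUnit_iff] at h
  simp [h] at hd

lemma two_dvd_sub_one {y : ℤ_[2]} (h : ¬ (2:ℤ_[2]) ∣ y) : (2:ℤ_[2]) ∣ y - 1 := by
  have hs := PadicInt.appr_spec 1 y
  rw [Ideal.mem_span_singleton] at hs
  have h1 : ((2:ℕ):ℤ_[2])^1 = (2:ℤ_[2]) := by norm_num
  rw [h1] at hs
  have hlt := PadicInt.appr_lt y 1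
  interval_cases h2 : (y.appr 1)
  · exfalso; apply h; simpa using hs
  · simpa using hs

/-- exact 2-adic valuation `t` -/
def Vt (t : ℕ) (y : ℤ_[2]) : Prop := (2:ℤ_[2])^t ∣ y ∧ ¬ (2:ℤ_[2])^(t+1) ∣ y

lemma pow_dvd_mono {s t : ℕ} (h : s ≤ t) {y : ℤ_[2]} (hd : (2:ℤ_[2])^t ∣ y) :
    (2:ℤ_[2])^s ∣ y := dvd_trans (pow_dvd_pow 2 h) hd

lemma Vt_le {s t : ℕ} {y : ℤ_[2]} (h : Vt t y) (hd : (2:ℤ_[2])^s ∣ y) : s ≤ t := by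
  by_contra hc
  exact h.2 (pow_dvd_mono (by omega) hd)

lemma Vt_iff (t : ℕ) (y : ℤ_[2]) :
    Vt t y ↔ ∃ c : ℤ_[2], ¬ (2:ℤ_[2]) ∣ c ∧ y = 2^t * c := by
  constructor
  · rintro ⟨⟨c, hc⟩, h2⟩
    refine ⟨c, fun hd => h2 ?_, hc⟩
    rcases hd with ⟨d, hd⟩
    exact ⟨d, by rw [hc, hd]; ring⟩
  · rintro ⟨c, hc, rfl⟩
    refine ⟨⟨c, rfl⟩, fun hd => hc ?_⟩
    rcases hd with ⟨d, hd⟩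
    have h2 : (2:ℤ_[2]) ^ t ≠ 0 := pow_ne_zero _ two_prime.ne_zero
    have : c = 2 * d := by
      apply mul_left_cancel₀ h2
      rw [pow_succ] at hd
      rw [hd]; ring
    exact ⟨d, this⟩

lemma Vt_mul {s t : ℕ} {a b : ℤ_[2]} (ha : Vt s a) (hb : Vt t b) : Vt (s+t) (a*b) := by
  rw [Vt_iff] at ha hb ⊢
  rcases ha with ⟨c, hc, rfl⟩
  rcases hb with ⟨d, hd, rfl⟩
  refine ⟨c * d, ?_, by ring⟩
  intro h
  rcases two_prime.dvd_mul.mp h with h | h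
  exacts [hc h, hd h]

lemma Vt_neg {t : ℕ} {a : ℤ_[2]} (ha : Vt t a) : Vt t (-a) :=
  ⟨ha.1.neg_right, fun h => ha.2 (dvd_neg.mp h)⟩

lemma Vt_unit_mul {t : ℕ} {a : ℤ_[2]} (u : ℤ_[2]ˣ) (ha : Vt t a) : Vt t ((u:ℤ_[2]) * a) := by
  refine ⟨ha.1.mul_left _, fun h => ha.2 ?_⟩
  have : (2:ℤ_[2])^(t+1) ∣ (↑u⁻¹ : ℤ_[2]) * ((u:ℤ_[2]) * a) := h.mul_left _
  rwa [← mul_assoc, Units.inv_mul, one_mul] at this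

lemma exists_Vt {y : ℤ_[2]} (hy : y ≠ 0) : ∃ t, Vt t y := by
  have hu := PadicInt.unitCoeff_spec (p := 2) hy
  refine ⟨(y.valuation), (Vt_iff _ _).mpr ⟨(PadicInt.unitCoeff hy : ℤ_[2]), ?_, ?_⟩⟩
  · exact not_dvd_of_isUnit (PadicInt.unitCoeff hy).isUnit
  · have : ((2:ℕ):ℤ_[2]) = (2:ℤ_[2]) := by norm_num
    rw [mul_comm, ← this]; exact hu

lemma unit_odd (q : ℤ_[2]ˣ) : ¬ (2:ℤ_[2]) ∣ (q:ℤ_[2]) := not_dvd_of_isUnit q.isUnit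

lemma odd_sum_even {c d : ℤ_[2]} (hc : ¬ (2:ℤ_[2]) ∣ c) (hd : ¬ (2:ℤ_[2]) ∣ d) :
    (2:ℤ_[2]) ∣ c + d := by
  have h1 := two_dvd_sub_one hc
  have h2 := two_dvd_sub_one hd
  have : c + d = (c - 1) + (d - 1) + 2 := by ring
  rw [this]
  exact dvd_add (dvd_add h1 h2) dvd_rfl

lemma odd_diff_even {c d : ℤ_[2]} (hc : ¬ (2:ℤ_[2]) ∣ c) (hd : ¬ (2:ℤ_[2]) ∣ d) :
    (2:ℤ_[2]) ∣ c - d := by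
  have : c - d = (c - 1) - (d - 1) := by ring
  rw [this]; exact dvd_sub (two_dvd_sub_one hc) (two_dvd_sub_one hd)

lemma four_split (q : ℤ_[2]ˣ) :
    (2:ℤ_[2])^2 ∣ (q:ℤ_[2]) - 1 ∨ (2:ℤ_[2])^2 ∣ (q:ℤ_[2]) + 1 := by
  have h1 : (2:ℤ_[2]) ∣ (q:ℤ_[2]) - 1 := two_dvd_sub_one (unit_odd q)
  rcases h1 with ⟨a, ha⟩
  rcases em ((2:ℤ_[2]) ∣ a) with ⟨b, hb⟩ | h
  · left; exact ⟨b, by rw [ha, hb]; ring⟩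
  · right
    rcases two_dvd_sub_one h with ⟨b, hb⟩
    refine ⟨b + 1, ?_⟩
    have ha' : (q:ℤ_[2]) + 1 = 2*a + 2 := by rw [← ha]; ring
    have : a = 2*b+1 := by linear_combination hb
    rw [ha', this]; ring

lemma Vt_two_pow (t : ℕ) : Vt t ((2:ℤ_[2])^t) :=
  (Vt_iff _ _).mpr ⟨1, two_prime.not_dvd_one, by ring⟩

lemma not_both_four (q : ℤ_[2]ˣ) :
    ¬ ((2:ℤ_[2])^2 ∣ (q:ℤ_[2]) - 1 ∧ (2:ℤ_[2])^2 ∣ (q:ℤ_[2]) + 1) := by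
  rintro ⟨h1, h2⟩
  have h5 := dvd_sub h2 h1
  have he : ((q:ℤ_[2]) + 1) - ((q:ℤ_[2]) - 1) = (2:ℤ_[2])^1 := by ring
  rw [he] at h5
  have := Vt_le (Vt_two_pow 1) h5
  omega

lemma Vt_add_one {x : ℤ_[2]} {t : ℕ} (ht : 2 ≤ t) (hx : Vt t (x - 1)) : Vt 1 (x + 1) := by
  constructor
  · have h1 : (2:ℤ_[2]) ∣ x - 1 := by
      have := pow_dvd_mono (s := 1) (by omega) hx.1
      simpa using this
    have : x + 1 = (x - 1) + 2 := by ring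
    rw [this, pow_one]; exact dvd_add h1 dvd_rfl
  · intro h
    have h1 : (2:ℤ_[2])^2 ∣ x - 1 := pow_dvd_mono ht hx.1
    have h' : (2:ℤ_[2])^2 ∣ x + 1 := by simpa using h
    have h5 := dvd_sub h' h1
    have he : ((x:ℤ_[2]) + 1) - (x - 1) = (2:ℤ_[2])^1 := by ring
    rw [he] at h5
    have := Vt_le (Vt_two_pow 1) h5
    omega

lemma Vt_sq {x : ℤ_[2]} {t : ℕ} (ht : 2 ≤ t) (hx : Vt t (x - 1)) : Vt (t+1) (x^2 - 1) := by
  have h := Vt_mul hx (Vt_add_one ht hx)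
  have he : (x - 1) * (x + 1) = x^2 - 1 := by ring
  rwa [he] at h

lemma Vt_pow_two (x : ℤ_[2]ˣ) {t : ℕ} (ht : 2 ≤ t) (hx : Vt t ((x:ℤ_[2]) - 1)) (j : ℕ) :
    Vt (t+j) ((↑(x^(2^j)) : ℤ_[2]) - 1) := by
  induction j with
  | zero => simpa using hx
  | succ j ih =>
    have h := Vt_sq (by omega) ih
    have he : (↑(x ^ 2 ^ j) : ℤ_[2])^2 = (↑(x ^ 2 ^ (j+1)) : ℤ_[2]) := by
      rw [← Units.val_pow_eq_pow_val, ← pow_mul, pow_succ]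
    rw [he] at h
    have he2 : t + (j+1) = (t+j) + 1 := by omega
    rw [he2]
    exact h

lemma dense_pow (x q : ℤ_[2]ˣ) {t : ℕ} (ht : 2 ≤ t) (hx : Vt t ((x:ℤ_[2]) - 1))
    (hq : (2:ℤ_[2])^t ∣ (q:ℤ_[2]) - 1) (j : ℕ) :
    ∃ k : ℕ, (2:ℤ_[2])^(t+j) ∣ ((↑(x^k) : ℤ_[2]) - ↑q) := by
  induction j with
  | zero =>
    refine ⟨0, ?_⟩
    have : (↑(x^0) : ℤ_[2]) - ↑q = -((q:ℤ_[2]) - 1) := by simp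
    rw [this]
    simpa using hq.neg_right
  | succ j ih =>
    obtain ⟨k, hk⟩ := ih
    by_cases hcase : (2:ℤ_[2])^(t+j+1) ∣ ((↑(x^k) : ℤ_[2]) - ↑q)
    · exact ⟨k, by simpa [add_assoc] using hcase⟩
    · have hV : Vt (t+j) ((↑(x^k) : ℤ_[2]) - ↑q) := ⟨hk, hcase⟩
      obtain ⟨d, hd, hdeq⟩ := (Vt_iff _ _).mp hV
      obtain ⟨w, hw, hweq⟩ := (Vt_iff _ _).mp (Vt_pow_two x ht hx j)
      refine ⟨k + 2^j, ?_⟩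
      have hxk : (↑(x^(k + 2^j)) : ℤ_[2]) = (↑(x^k) : ℤ_[2]) * (↑(x^(2^j)) : ℤ_[2]) := by
        rw [pow_add, Units.val_mul]
      have hxe : (↑(x^k) : ℤ_[2]) = ↑q + 2^(t+j) * d := by linear_combination hdeq
      have hs : (↑(x^(2^j)) : ℤ_[2]) = 1 + 2^(t+j) * w := by linear_combination hweq
      have hdw : (2:ℤ_[2]) ∣ d + ↑q * w := by
        refine odd_sum_even hd (fun hdvd => ?_)
        rcases two_prime.dvd_mul.mp hdvd with h | h
        exacts [unit_odd q h, hw h]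
      have key : (↑(x^(k + 2^j)) : ℤ_[2]) - ↑q
          = 2^(t+j) * (d + ↑q * w + 2^(t+j) * (d * w)) := by
        rw [hxk, hs, hxe]; ring
      have h2 : (2:ℤ_[2]) ∣ (d + ↑q * w + 2^(t+j) * (d*w)) :=
        dvd_add hdw (dvd_mul_of_dvd_left (dvd_pow_self 2 (by omega)) _)
      have hpe : (2:ℤ_[2])^(t+(j+1)) = 2^(t+j) * 2 := by rw [← pow_succ]; ring_nf
      rw [key, hpe]
      exact mul_dvd_mul_left _ h2

/-- the subgroup `H'_t` (as units) -/
def Hs (t : ℕ) : Subgroup ℤ_[2]ˣ where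
  carrier := {q | (2:ℤ_[2])^t ∣ (q:ℤ_[2]) - 1}
  one_mem' := by simp
  mul_mem' := by
    intro a b ha hb
    have he : (↑(a*b) : ℤ_[2]) - 1 = (↑a : ℤ_[2]) * ((↑b:ℤ_[2]) - 1) + ((↑a:ℤ_[2]) - 1) := by
      rw [Units.val_mul]; ring
    rw [Set.mem_setOf_eq, he]
    exact dvd_add (hb.mul_left _) ha
  inv_mem' := by
    intro a ha
    have he : (↑a⁻¹ : ℤ_[2]) - 1 = (↑a⁻¹ : ℤ_[2]) * (1 - (↑a:ℤ_[2])) := by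
      have h1 : (↑a⁻¹ : ℤ_[2]) * (↑a:ℤ_[2]) = 1 := by
        rw [← Units.val_mul, inv_mul_cancel, Units.val_one]
      linear_combination h1
    rw [Set.mem_setOf_eq, he]
    exact Dvd.dvd.mul_left (by simpa using (Dvd.dvd.neg_right ha)) _

lemma Hs_mem_iff {t : ℕ} (q : ℤ_[2]ˣ) : q ∈ Hs t ↔ (2:ℤ_[2])^t ∣ (q:ℤ_[2]) - 1 := Iff.rfl

lemma Hs_closed (t : ℕ) : IsClosed ((Hs t : Subgroup ℤ_[2]ˣ) : Set ℤ_[2]ˣ) := by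
  have he : ((Hs t : Subgroup ℤ_[2]ˣ) : Set ℤ_[2]ˣ)
      = (fun q : ℤ_[2]ˣ => ‖(q : ℤ_[2]) - 1‖) ⁻¹' (Set.Iic ((2:ℝ)^(-(t:ℤ)))) := by
    ext q
    simp only [Set.mem_preimage, Set.mem_Iic, SetLike.mem_coe, Hs_mem_iff, dvd_iff_norm]
  rw [he]
  apply IsClosed.preimage
  · exact (continuous_norm.comp ((Units.continuous_val).sub continuous_const))
  · exact isClosed_Iic

lemma tendsto_of_dvd (f : ℕ → ℤ_[2]) (g : ℤ_[2])
    (h : ∀ m, (2:ℤ_[2])^m ∣ f m - g) : Filter.Tendsto f Filter.atTop (nhds g) := by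
  rw [tendsto_iff_dist_tendsto_zero]
  apply squeeze_zero (fun m => dist_nonneg)
    (fun m => ?_) (g := fun m => (2⁻¹:ℝ)^m)
  · exact tendsto_pow_atTop_nhds_zero_of_lt_one (by norm_num) (by norm_num)
  · rw [dist_eq_norm]
    have := (dvd_iff_norm m (f m - g)).mp (h m)
    calc ‖f m - g‖ ≤ (2:ℝ)^(-(m:ℤ)) := this
    _ = (2⁻¹:ℝ)^m := by rw [zpow_neg, ← inv_zpow]; norm_num

/-- main closure computation, case `v(x-1) = t` -/
lemma closure_Hs (x : ℤ_[2]ˣ) {t : ℕ} (ht : 2 ≤ t) (hx : Vt t ((x:ℤ_[2]) - 1)) :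
    closure ((Subgroup.zpowers x : Subgroup ℤ_[2]ˣ) : Set ℤ_[2]ˣ)
      = ((Hs t : Subgroup ℤ_[2]ˣ) : Set ℤ_[2]ˣ) := by
  apply le_antisymm
  · apply closure_minimal _ (Hs_closed t)
    rw [SetLike.coe_subset_coe, Subgroup.zpowers_le]
    exact hx.1
  · intro q hq
    rw [SetLike.mem_coe, Hs_mem_iff] at hq
    choose k hk using fun j => dense_pow x q ht hx hq j
    have htend : Filter.Tendsto (fun j => x ^ (k j)) Filter.atTop (nhds q) := by
      rw [Units.isEmbedding_embedProduct.tendsto_nhds_iff]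
      have h1 : Filter.Tendsto (fun j => ((x ^ (k j) : ℤ_[2]ˣ) : ℤ_[2]))
          Filter.atTop (nhds (q : ℤ_[2])) := by
        apply tendsto_of_dvd
        intro m
        exact (dvd_trans (pow_dvd_pow 2 (by omega)) (hk m))
      have h2 : Filter.Tendsto (fun j => (((x ^ (k j))⁻¹ : ℤ_[2]ˣ) : ℤ_[2]))
          Filter.atTop (nhds ((q⁻¹ : ℤ_[2]ˣ) : ℤ_[2])) := by
        apply tendsto_of_dvd
        intro m
        have key : (((x ^ (k m))⁻¹ : ℤ_[2]ˣ) : ℤ_[2]) - ((q⁻¹ : ℤ_[2]ˣ) : ℤ_[2])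
            = (((x ^ (k m))⁻¹ : ℤ_[2]ˣ) : ℤ_[2]) * (((q : ℤ_[2])) - ((x ^ (k m) : ℤ_[2]ˣ) : ℤ_[2])) * ((q⁻¹ : ℤ_[2]ˣ) : ℤ_[2]) := by
          have e1 : (((x ^ (k m))⁻¹ : ℤ_[2]ˣ) : ℤ_[2]) * ((x ^ (k m) : ℤ_[2]ˣ) : ℤ_[2]) = 1 := by
            rw [← Units.val_mul, inv_mul_cancel, Units.val_one]
          have e2 : ((q : ℤ_[2])) * ((q⁻¹ : ℤ_[2]ˣ) : ℤ_[2]) = 1 := by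
            rw [← Units.val_mul, mul_inv_cancel, Units.val_one]
          linear_combination ((q⁻¹ : ℤ_[2]ˣ) : ℤ_[2]) * e1 - (((x ^ (k m))⁻¹ : ℤ_[2]ˣ) : ℤ_[2]) * e2
        rw [key]
        have hd0 : (2:ℤ_[2])^(t+m) ∣ ((q:ℤ_[2]) - ((x ^ (k m) : ℤ_[2]ˣ) : ℤ_[2])) := by
          simpa [neg_sub] using (hk m).neg_right
        exact dvd_trans (pow_dvd_pow 2 (by omega)) ((hd0.mul_left _).mul_right _)
      exact h1.prodMk_nhds ((MulOpposite.continuous_op.tendsto _).comp h2)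
    exact mem_closure_of_tendsto htend
      (Filter.Eventually.of_forall (fun j => ⟨(k j : ℤ), by simp [zpow_natCast]⟩))

lemma Vt_sub_one_of_add {x : ℤ_[2]ˣ} {t : ℕ} (ht : 2 ≤ t) (hx : Vt t ((x:ℤ_[2]) + 1)) :
    Vt 1 ((x:ℤ_[2]) - 1) := by
  constructor
  · have h1 : (2:ℤ_[2]) ∣ (x:ℤ_[2]) + 1 := by
      have := pow_dvd_mono (s := 1) (by omega) hx.1; simpa using this
    have he : (x:ℤ_[2]) - 1 = ((x:ℤ_[2]) + 1) - 2 := by ring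
    rw [he, pow_one]
    exact dvd_sub h1 dvd_rfl
  · intro h
    exact not_both_four x ⟨by simpa using h, pow_dvd_mono ht hx.1⟩

lemma Vt_sq_of_add {x : ℤ_[2]ˣ} {t : ℕ} (ht : 2 ≤ t) (hx : Vt t ((x:ℤ_[2]) + 1)) :
    Vt (t+1) ((↑(x^2) : ℤ_[2]) - 1) := by
  have h := Vt_mul (Vt_sub_one_of_add ht hx) hx
  have he : ((x:ℤ_[2]) - 1) * ((x:ℤ_[2]) + 1) = (↑(x^2) : ℤ_[2]) - 1 := by
    rw [Units.val_pow_eq_pow_val]; ring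
  rw [he] at h
  have he2 : 1 + t = t + 1 := by omega
  rwa [he2] at h

/-- the closed coset set -/
def Cs (x : ℤ_[2]ˣ) (t : ℕ) : Set ℤ_[2]ˣ :=
  ((Hs (t+1) : Subgroup ℤ_[2]ˣ) : Set ℤ_[2]ˣ) ∪ (fun h => x * h) '' (Hs (t+1))

lemma Cs_closed (x : ℤ_[2]ˣ) (t : ℕ) : IsClosed (Cs x t) := by
  apply IsClosed.union (Hs_closed _)
  have he : (fun h => x * h) '' ((Hs (t+1) : Subgroup ℤ_[2]ˣ) : Set ℤ_[2]ˣ)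
      = (fun q => x⁻¹ * q) ⁻¹' ((Hs (t+1) : Subgroup ℤ_[2]ˣ) : Set ℤ_[2]ˣ) := by
    ext q
    constructor
    · rintro ⟨h, hh, rfl⟩
      simpa [← mul_assoc] using hh
    · intro hq
      exact ⟨x⁻¹ * q, hq, by simp [← mul_assoc]⟩
  rw [he]
  exact (Hs_closed _).preimage (continuous_const.mul continuous_id)

lemma closure_coset (x : ℤ_[2]ˣ) {t : ℕ} (ht : 2 ≤ t) (hx : Vt t ((x:ℤ_[2]) + 1)) :
    closure ((Subgroup.zpowers x : Subgroup ℤ_[2]ˣ) : Set ℤ_[2]ˣ) = Cs x t := by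
  have hsq := Vt_sq_of_add ht hx
  apply le_antisymm
  · apply closure_minimal _ (Cs_closed x t)
    rintro q ⟨n, rfl⟩
    rcases Int.even_or_odd n with ⟨m, hm⟩ | ⟨m, hm⟩
    · left
      have he : x ^ n = (x^2) ^ m := by
        rw [hm, show m + m = 2 * m by ring, zpow_mul,
          show ((2:ℤ)) = ((2:ℕ):ℤ) by norm_num, zpow_natCast]
      show x ^ n ∈ ((Hs (t+1) : Subgroup ℤ_[2]ˣ) : Set ℤ_[2]ˣ)
      rw [SetLike.mem_coe, he]
      exact Subgroup.zpow_mem _ ((Hs_mem_iff _).mpr hsq.1) m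
    · right
      refine ⟨(x^2)^m, Subgroup.zpow_mem _ ((Hs_mem_iff _).mpr hsq.1) m, ?_⟩
      show x * (x^2)^m = x ^ n
      rw [hm, zpow_add, zpow_mul, zpow_one,
        show ((2:ℤ)) = ((2:ℕ):ℤ) by norm_num, zpow_natCast, mul_comm]
  · set T := (Subgroup.zpowers x).topologicalClosure with hT
    have hxT : x ∈ T := Subgroup.le_topologicalClosure _ (Subgroup.mem_zpowers x)
    have hHT : ∀ h : ℤ_[2]ˣ, h ∈ Hs (t+1) → h ∈ T := by
      intro h hh
      have h1 : ((Hs (t+1) : Subgroup ℤ_[2]ˣ) : Set ℤ_[2]ˣ)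
          ⊆ closure ((Subgroup.zpowers x : Subgroup ℤ_[2]ˣ) : Set ℤ_[2]ˣ) := by
        rw [← closure_Hs (x^2) (by omega) hsq]
        apply closure_mono
        rw [SetLike.coe_subset_coe, Subgroup.zpowers_le]
        exact ⟨(2:ℤ), by
          show x ^ (((2:ℕ)):ℤ) = x ^ (2:ℕ)
          rw [zpow_natCast]⟩
      exact h1 hh
    rintro q (hq | ⟨h, hh, rfl⟩)
    · exact hHT q hq
    · exact T.mul_mem hxT (hHT h hh)

lemma Cs_congr {x y : ℤ_[2]ˣ} {t : ℕ} (hx : Vt t ((x:ℤ_[2]) + 1)) (hy : Vt t ((y:ℤ_[2]) + 1)) :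
    Cs x t = Cs y t := by
  have key : ∀ a b : ℤ_[2]ˣ, Vt t ((a:ℤ_[2]) + 1) → Vt t ((b:ℤ_[2]) + 1) →
      b⁻¹ * a ∈ Hs (t+1) := by
    intro a b ha hb
    rw [Hs_mem_iff]
    have he : (↑(b⁻¹ * a) : ℤ_[2]) - 1 = (↑b⁻¹ : ℤ_[2]) * ((a:ℤ_[2]) - (b:ℤ_[2])) := by
      have e1 : (↑b⁻¹ : ℤ_[2]) * (b:ℤ_[2]) = 1 := by
        rw [← Units.val_mul, inv_mul_cancel, Units.val_one]
      rw [Units.val_mul]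
      linear_combination e1
    rw [he]
    obtain ⟨c, hc, hceq⟩ := (Vt_iff _ _).mp ha
    obtain ⟨d, hd, hdeq⟩ := (Vt_iff _ _).mp hb
    have he2 : (a:ℤ_[2]) - (b:ℤ_[2]) = 2^t * (c - d) := by
      have : (a:ℤ_[2]) - (b:ℤ_[2]) = ((a:ℤ_[2]) + 1) - ((b:ℤ_[2]) + 1) := by ring
      rw [this, hceq, hdeq]; ring
    rw [he2]
    obtain ⟨e, he3⟩ := odd_diff_even hc hd
    exact Dvd.dvd.mul_left ⟨e, by rw [he3, pow_succ]; ring⟩ _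
  have himg : ∀ a b : ℤ_[2]ˣ, Vt t ((a:ℤ_[2]) + 1) → Vt t ((b:ℤ_[2]) + 1) →
      (fun h => a * h) '' (Hs (t+1)) ⊆ (fun h => b * h) '' (Hs (t+1)) := by
    rintro a b ha hb _ ⟨h, hh, rfl⟩
    refine ⟨(b⁻¹ * a) * h, (Hs (t+1)).mul_mem (key a b ha hb) hh, ?_⟩
    simp [← mul_assoc]
  unfold Cs
  rw [Set.Subset.antisymm (himg x y hx hy) (himg y x hy hx)]

end S10X

/-- Let `K ≤ ℤ_2ˣ` be a subgroup such that membership in `K` depends only on the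
closed subgroup generated by an element, and suppose `K` contains an element of
infinite order. Then `K` is of one of the forms `H'_n` or `±H'_n` (for some
`2 ≤ n`), or `H'_n ∪ (−1 + 2^(n−1))·H'_n` (for some `3 ≤ n`). -/
theorem stmt10 (K : Subgroup ℤ_[2]ˣ)
    (hcl : ∀ x y : ℤ_[2]ˣ,
      closure ((Subgroup.zpowers x : Subgroup ℤ_[2]ˣ) : Set ℤ_[2]ˣ) =
        closure ((Subgroup.zpowers y : Subgroup ℤ_[2]ˣ) : Set ℤ_[2]ˣ) →
      (x ∈ K ↔ y ∈ K))
    (hinf : ∃ x ∈ K, ¬ IsOfFinOrder x) :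
    (∃ n : ℕ, 2 ≤ n ∧ (K : Set ℤ_[2]ˣ) = {q : ℤ_[2]ˣ | stmt10H n (q : ℤ_[2])}) ∨
    (∃ n : ℕ, 2 ≤ n ∧ (K : Set ℤ_[2]ˣ) =
      {q : ℤ_[2]ˣ | stmt10H n (q : ℤ_[2]) ∨ stmt10H n (-(q : ℤ_[2]))}) ∨
    (∃ n : ℕ, 3 ≤ n ∧ (K : Set ℤ_[2]ˣ) =
      {q : ℤ_[2]ˣ | stmt10H n (q : ℤ_[2]) ∨
        ∃ h : ℤ_[2], stmt10H n h ∧ (q : ℤ_[2]) = (-1 + 2 ^ (n - 1)) * h}) := by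
  classical
  open S10X in
  -- membership is constant on exact-valuation classes
  have congrH : ∀ (x y : ℤ_[2]ˣ) (t : ℕ), 2 ≤ t → Vt t ((x:ℤ_[2]) - 1) →
      Vt t ((y:ℤ_[2]) - 1) → (x ∈ K ↔ y ∈ K) := by
    intro x y t ht hx hy
    exact hcl x y (by rw [closure_Hs x ht hx, closure_Hs y ht hy])
  have congrC : ∀ (x y : ℤ_[2]ˣ) (t : ℕ), 2 ≤ t → Vt t ((x:ℤ_[2]) + 1) →
      Vt t ((y:ℤ_[2]) + 1) → (x ∈ K ↔ y ∈ K) := by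
    intro x y t ht hx hy
    exact hcl x y (by rw [closure_coset x ht hx, closure_coset y ht hy, Cs_congr hx hy])
  set InA : ℕ → Prop := fun t => 2 ≤ t ∧ ∃ q, q ∈ K ∧ Vt t ((q:ℤ_[2]) - 1) with hInAdef
  set InB : ℕ → Prop := fun t => 2 ≤ t ∧ ∃ q, q ∈ K ∧ Vt t ((q:ℤ_[2]) + 1) with hInBdef
  have memK_of_InA : ∀ (t : ℕ) (q : ℤ_[2]ˣ), InA t → Vt t ((q:ℤ_[2]) - 1) → q ∈ K := by
    rintro t q ⟨ht, r, hr, hv⟩ hq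
    exact (congrH q r t ht hq hv).mpr hr
  have memK_of_InB : ∀ (t : ℕ) (q : ℤ_[2]ˣ), InB t → Vt t ((q:ℤ_[2]) + 1) → q ∈ K := by
    rintro t q ⟨ht, r, hr, hv⟩ hq
    exact (congrC q r t ht hq hv).mpr hr
  have InA_succ : ∀ t, InA t → InA (t+1) := by
    rintro t ⟨ht, q, hq, hv⟩
    refine ⟨by omega, q^2, K.pow_mem hq 2, ?_⟩
    have := Vt_sq (x := (q:ℤ_[2])) ht hv
    rwa [← Units.val_pow_eq_pow_val] at this
  -- A is nonempty
  have hAne : ∃ t, InA t := by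
    obtain ⟨x, hxK, hxord⟩ := hinf
    have hx1 : (x:ℤ_[2]) ≠ 1 := by
      intro h
      have hx : x = 1 := Units.ext (by rw [h, Units.val_one])
      exact hxord (hx ▸ IsOfFinOrder.one)
    have hxm1 : (x:ℤ_[2]) ≠ -1 := by
      intro h
      have hx : x = -1 := Units.ext (by rw [h]; simp)
      apply hxord
      rw [hx]
      exact (isOfFinOrder_iff_pow_eq_one).mpr ⟨2, by norm_num, by simp⟩
    rcases four_split x with h4 | h4
    · obtain ⟨t, hvt⟩ := exists_Vt (sub_ne_zero.mpr hx1)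
      exact ⟨t, Vt_le hvt h4, x, hxK, hvt⟩
    · have hne : (x:ℤ_[2]) + 1 ≠ 0 := by
        intro h
        exact hxm1 (by linear_combination h)
      obtain ⟨t, hvt⟩ := exists_Vt hne
      have ht : 2 ≤ t := Vt_le hvt h4
      exact ⟨t+1, by omega, x^2, K.pow_mem hxK 2, Vt_sq_of_add ht hvt⟩
  set a := Nat.find hAne with hadef
  have hInA_a : InA a := Nat.find_spec hAne
  have ha2 : 2 ≤ a := hInA_a.1
  have ha_min : ∀ t, InA t → a ≤ t := fun t ht => Nat.find_min' hAne ht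
  have InA_of_le : ∀ t, a ≤ t → InA t := by
    intro t ht
    induction t, ht using Nat.le_induction with
    | base => exact hInA_a
    | succ n hn ih => exact InA_succ n ih
  -- classification of units
  have classify : ∀ q : ℤ_[2]ˣ, (q:ℤ_[2]) = 1 ∨ (q:ℤ_[2]) = -1 ∨
      (∃ t, 2 ≤ t ∧ Vt t ((q:ℤ_[2]) - 1)) ∨ (∃ t, 2 ≤ t ∧ Vt t ((q:ℤ_[2]) + 1)) := by
    intro q
    by_cases h1 : (q:ℤ_[2]) = 1
    · exact Or.inl h1
    by_cases hm : (q:ℤ_[2]) = -1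
    · exact Or.inr (Or.inl hm)
    refine Or.inr (Or.inr ?_)
    rcases four_split q with h4 | h4
    · obtain ⟨t, hvt⟩ := exists_Vt (sub_ne_zero.mpr h1)
      exact Or.inl ⟨t, Vt_le hvt h4, hvt⟩
    · have hne : (q:ℤ_[2]) + 1 ≠ 0 := fun h => hm (by linear_combination h)
      obtain ⟨t, hvt⟩ := exists_Vt hne
      exact Or.inr ⟨t, Vt_le hvt h4, hvt⟩
  -- reverse direction for `H`-part
  have revH : ∀ q : ℤ_[2]ˣ, (2:ℤ_[2])^a ∣ (q:ℤ_[2]) - 1 → q ∈ K := by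
    intro q hdvd
    by_cases h1 : (q:ℤ_[2]) = 1
    · have : q = 1 := Units.ext (by simpa using h1)
      rw [this]; exact K.one_mem
    · obtain ⟨t, hvt⟩ := exists_Vt (sub_ne_zero.mpr h1)
      exact memK_of_InA t q (InA_of_le t (Vt_le hvt hdvd)) hvt
  have fwdH : ∀ (q : ℤ_[2]ˣ) (t : ℕ), q ∈ K → 2 ≤ t → Vt t ((q:ℤ_[2]) - 1) →
      (2:ℤ_[2])^a ∣ (q:ℤ_[2]) - 1 := by
    intro q t hq h2 hv
    exact pow_dvd_mono (ha_min t ⟨h2, q, hq, hv⟩) hv.1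
  have four_eq : (4:ℤ_[2]) = 2^2 := by norm_num
  have stmtH_of_dvd : ∀ (y : ℤ_[2]) (n : ℕ), 2 ≤ n → (2:ℤ_[2])^n ∣ y - 1 → stmt10H n y := by
    intro y n hn h
    exact ⟨four_eq ▸ pow_dvd_mono hn h, h⟩
  by_cases hneg : (-1 : ℤ_[2]ˣ) ∈ K
  · -- case ±H'_a
    refine Or.inr (Or.inl ⟨a, ha2, ?_⟩)
    ext q
    simp only [SetLike.mem_coe, Set.mem_setOf_eq]
    constructor
    · intro hq
      rcases classify q with h1 | hm1 | ⟨t, h2, hv⟩ | ⟨t, h2, hv⟩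
      · exact Or.inl (stmtH_of_dvd _ _ ha2 (by rw [h1]; simp))
      · exact Or.inr (stmtH_of_dvd _ _ ha2 (by rw [hm1]; simp))
      · exact Or.inl (stmtH_of_dvd _ _ ha2 (fwdH q t hq h2 hv))
      · refine Or.inr (stmtH_of_dvd _ _ ha2 ?_)
        have hrK : (-1) * q ∈ K := K.mul_mem hneg hq
        have hval : (↑((-1) * q : ℤ_[2]ˣ) : ℤ_[2]) = -(q:ℤ_[2]) := by simp
        have hvr : Vt t ((↑((-1) * q : ℤ_[2]ˣ) : ℤ_[2]) - 1) := by
          rw [hval]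
          have := Vt_neg hv
          have he : -((q:ℤ_[2]) + 1) = -(q:ℤ_[2]) - 1 := by ring
          rwa [he] at this
        have := fwdH _ t hrK h2 hvr
        rwa [hval] at this
    · rintro (⟨h4, hdvd⟩ | ⟨h4, hdvd⟩)
      · exact revH q hdvd
      · have hval : (↑((-1) * q : ℤ_[2]ˣ) : ℤ_[2]) = -(q:ℤ_[2]) := by simp
        have hrK : (-1) * q ∈ K := by
          apply revH
          rw [hval]
          exact hdvd
        have hqe : (-1 : ℤ_[2]ˣ) * ((-1) * q) = q := by
          rw [← mul_assoc]; simp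
        exact hqe ▸ K.mul_mem hneg hrK
  by_cases hB : ∃ t, InB t
  · -- case H'_a ∪ coset
    obtain ⟨b, hb⟩ := hB
    have InB_eq : ∀ t, InB t → t + 1 = a := by
      rintro t ht
      have hA1 : InA (t+1) := by
        obtain ⟨h2, y, hy, hvy⟩ := ht
        exact ⟨by omega, y^2, K.pow_mem hy 2, Vt_sq_of_add h2 hvy⟩
      have h1 : a ≤ t + 1 := ha_min _ hA1
      have hnot : ¬ (a ≤ t) := by
        intro hle
        obtain ⟨h2t, y, hy, hvy⟩ := ht
        obtain ⟨_, u, hu, hvu⟩ := InA_of_le t hle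
        set z : ℤ_[2]ˣ := -(u⁻¹) with hzdef
        have hzval : (z : ℤ_[2]) = -(↑u⁻¹ : ℤ_[2]) := by simp [hzdef]
        have e1 : (↑u⁻¹ : ℤ_[2]) * (u:ℤ_[2]) = 1 := by
          rw [← Units.val_mul, inv_mul_cancel, Units.val_one]
        have hzv : Vt t ((z:ℤ_[2]) + 1) := by
          have he : (z:ℤ_[2]) + 1 = (↑u⁻¹ : ℤ_[2]) * ((u:ℤ_[2]) - 1) := by
            rw [hzval]; linear_combination -e1
          rw [he]
          exact Vt_unit_mul u⁻¹ hvu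
        have hzK : z ∈ K := (congrC z y t h2t hzv hvy).mpr hy
        have huz : u * z = -1 := by
          apply Units.ext
          have : (↑(u * z) : ℤ_[2]) = (u:ℤ_[2]) * (z:ℤ_[2]) := Units.val_mul u z
          rw [this, hzval]
          have : (↑(-1 : ℤ_[2]ˣ) : ℤ_[2]) = -1 := by simp
          rw [this]
          linear_combination -e1
        exact hneg (huz ▸ K.mul_mem hu hzK)
      omega
    have hba : b + 1 = a := InB_eq b hb
    have ha3 : 3 ≤ a := by have := hb.1; omega
    refine Or.inr (Or.inr ⟨a, ha3, ?_⟩)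
    -- the canonical coset representative
    have hwodd : ¬ (2:ℤ_[2]) ∣ (-1 + 2^(a-1)) := by
      intro h
      have h1 : (2:ℤ_[2]) ∣ 2^(a-1) := dvd_pow_self 2 (by omega)
      have : (2:ℤ_[2]) ∣ 1 := by
        have he : (1:ℤ_[2]) = 2^(a-1) - (-1 + 2^(a-1)) := by ring
        rw [he]
        exact dvd_sub h1 h
      exact two_prime.not_dvd_one this
    set w : ℤ_[2]ˣ := (isUnit_of_not_dvd hwodd).unit with hwdef
    have hwval : (w : ℤ_[2]) = -1 + 2^(a-1) := (isUnit_of_not_dvd hwodd).unit_spec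
    have hwv : Vt (a-1) ((w:ℤ_[2]) + 1) := by
      have he : (w:ℤ_[2]) + 1 = 2^(a-1) := by rw [hwval]; ring
      rw [he]
      exact Vt_two_pow (a-1)
    ext q
    simp only [SetLike.mem_coe, Set.mem_setOf_eq]
    constructor
    · intro hq
      rcases classify q with h1 | hm1 | ⟨t, h2, hv⟩ | ⟨t, h2, hv⟩
      · exact Or.inl (stmtH_of_dvd _ _ (by omega) (by rw [h1]; simp))
      · exact absurd (Units.ext (show (q:ℤ_[2]) = ((-1 : ℤ_[2]ˣ) : ℤ_[2]) by
          rw [hm1]; simp) ▸ hq) hneg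
      · exact Or.inl (stmtH_of_dvd _ _ (by omega) (fwdH q t hq h2 hv))
      · -- q is in the coset
        have hts : t = a - 1 := by have := InB_eq t ⟨h2, q, hq, hv⟩; omega
        subst hts
        refine Or.inr ⟨(↑(q * w⁻¹) : ℤ_[2]), stmtH_of_dvd _ _ (by omega) ?_, ?_⟩
        · -- 2^a ∣ q w⁻¹ - 1
          have e1 : (↑w⁻¹ : ℤ_[2]) * (w:ℤ_[2]) = 1 := by
            rw [← Units.val_mul, inv_mul_cancel, Units.val_one]
          have he : (↑(q * w⁻¹) : ℤ_[2]) - 1 = (↑w⁻¹ : ℤ_[2]) * ((q:ℤ_[2]) - (w:ℤ_[2])) := by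
            rw [Units.val_mul]
            linear_combination e1
          rw [he]
          obtain ⟨c, hc, hceq⟩ := (Vt_iff _ _).mp hv
          have he2 : (q:ℤ_[2]) - (w:ℤ_[2]) = 2^(a-1) * (c - 1) := by
            have : (q:ℤ_[2]) - (w:ℤ_[2]) = ((q:ℤ_[2]) + 1) - ((w:ℤ_[2]) + 1) := by ring
            rw [this, hceq, hwval]; ring
          obtain ⟨e, he3⟩ := two_dvd_sub_one hc
          have he4 : (q:ℤ_[2]) - (w:ℤ_[2]) = 2^a * e := by
            rw [he2, he3]
            rw [show (2:ℤ_[2])^a = 2^(a-1) * 2 by rw [← pow_succ]; congr 1; omega]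
            ring
          exact Dvd.dvd.mul_left ⟨e, he4⟩ _
        · -- q = (-1+2^(a-1)) * (q w⁻¹)
          have e1 : (w:ℤ_[2]) * (↑w⁻¹ : ℤ_[2]) = 1 := by
            rw [← Units.val_mul, mul_inv_cancel, Units.val_one]
          rw [← hwval, Units.val_mul]
          linear_combination -(q:ℤ_[2]) * e1
    · rintro (⟨h4, hdvd⟩ | ⟨h, ⟨hh4, hhd⟩, hqe⟩)
      · exact revH q hdvd
      · -- coset part is in K
        have hqval : (q:ℤ_[2]) = (w:ℤ_[2]) * h := by rw [hwval]; exact hqe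
        have hqv : Vt (a-1) ((q:ℤ_[2]) + 1) := by
          have he : (q:ℤ_[2]) + 1 = (w:ℤ_[2]) * (h - 1) + 2^(a-1) := by
            rw [hqval, hwval]; ring
          constructor
          · rw [he]
            refine dvd_add (Dvd.dvd.mul_left (pow_dvd_mono (by omega) hhd) _) dvd_rfl
          · intro hcon
            rw [show (a-1)+1 = a by omega] at hcon
            have hd1 : (2:ℤ_[2])^a ∣ (w:ℤ_[2]) * (h - 1) := Dvd.dvd.mul_left hhd _
            have : (2:ℤ_[2])^a ∣ 2^(a-1) := by
              have he2 : (2:ℤ_[2])^(a-1) = ((q:ℤ_[2]) + 1) - (w:ℤ_[2]) * (h - 1) := by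
                rw [he]; ring
              rw [he2]
              exact dvd_sub hcon hd1
            have := Vt_le (Vt_two_pow (a-1)) this
            omega
        have hbv : InB (a-1) := by rw [show a - 1 = b by omega]; exact hb
        exact memK_of_InB (a-1) q hbv hqv
  · -- case H'_a alone
    refine Or.inl ⟨a, ha2, ?_⟩
    ext q
    simp only [SetLike.mem_coe, Set.mem_setOf_eq]
    constructor
    · intro hq
      rcases classify q with h1 | hm1 | ⟨t, h2, hv⟩ | ⟨t, h2, hv⟩
      · exact stmtH_of_dvd _ _ ha2 (by rw [h1]; simp)
      · exact absurd (Units.ext (show (q:ℤ_[2]) = ((-1 : ℤ_[2]ˣ) : ℤ_[2]) by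
          rw [hm1]; simp) ▸ hq) hneg
      · exact stmtH_of_dvd _ _ ha2 (fwdH q t hq h2 hv)
      · exact absurd ⟨h2, q, hq, hv⟩ (fun h => hB ⟨t, h⟩)
    · rintro ⟨h4, hdvd⟩
      exact revH q hdvd
end
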